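/- arXiv:2410.23787 — 5 statements merged into one kernel-verified Lean document; each statement's English description precedes it below -/
import Mathlib

section
/- For every positive integer n, the n-th Catalan number satisfies C_n = 2 exp( ∫₀^∞ [ ((1+t)^{-2n} - (1+t)^{-n} - (1+t)^{-n-2} + (1+t)^{-1}) / log(1+t) - e^{-t} ] (dt/t) ). -/
open MeasureTheory Set Real Filter

lemma tendsto_setIntegral_Ioi {g : ℝ → ℝ} (hg : IntegrableOn g (Ioi 0)) :
    Tendsto (fun ε : ℝ => ∫ t in Ioi ε, g t) (nhdsWithin 0 (Ioi 0))
      (nhds (∫ t in Ioi (0:ℝ), g t)) := by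
  have h : Tendsto (fun ε : ℝ => ∫ t in Ioi (0:ℝ), (Ioi ε).indicator g t)
      (nhdsWithin 0 (Ioi 0)) (nhds (∫ t in Ioi (0:ℝ), g t)) := by
    apply tendsto_integral_filter_of_dominated_convergence (fun t => |g t|)
    · filter_upwards with ε
      exact (hg.1.indicator measurableSet_Ioi)
    · filter_upwards with ε
      filter_upwards with t
      rw [norm_indicator_eq_indicator_norm]
      exact Set.indicator_le_self' (fun _ _ => abs_nonneg _) t
    · exact hg.abs
    · filter_upwards [ae_restrict_mem measurableSet_Ioi] with t ht
      have hev : ∀ᶠ ε in nhdsWithin (0:ℝ) (Ioi 0), (Ioi ε).indicator g t = g t := by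
        have h1 : Iio t ∈ nhdsWithin (0:ℝ) (Ioi 0) :=
          mem_nhdsWithin_of_mem_nhds (Iio_mem_nhds ht)
        filter_upwards [h1] with ε hε
        exact Set.indicator_of_mem (by exact hε) g
      exact Tendsto.congr' (hev.mono fun x h => h.symm) tendsto_const_nhds
  apply h.congr'
  filter_upwards [self_mem_nhdsWithin] with ε (hε : 0 < ε)
  rw [setIntegral_indicator measurableSet_Ioi]
  congr 1
  rw [Set.Ioi_inter_Ioi, max_eq_right hε.le]

lemma frullani_exp {c : ℝ} (hc : 1 ≤ c) :
    ∫ u in Ioi (0:ℝ), (exp (-u) - exp (-(c*u)))/u = Real.log c := by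
  have hc0 : 0 < c := lt_of_lt_of_le one_pos hc
  -- integrability on the product
  have hmeas : AEStronglyMeasurable (Function.uncurry fun u s : ℝ => exp (-(u*s)))
      ((volume.restrict (Ioi (0:ℝ))).prod (volume.restrict (Ioc (1:ℝ) c))) := by
    apply Continuous.aestronglyMeasurable
    fun_prop
  have hb : Integrable (fun z : ℝ×ℝ => exp (-z.1) * 1)
      ((volume.restrict (Ioi (0:ℝ))).prod (volume.restrict (Ioc (1:ℝ) c))) := by
    have h1 : Integrable (fun u : ℝ => exp (-u)) (volume.restrict (Ioi (0:ℝ))) := by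
      exact (by simpa using exp_neg_integrableOn_Ioi 0 one_pos : IntegrableOn (fun u : ℝ => exp (-u)) (Ioi 0))
    have h2 : Integrable (fun _ : ℝ => (1:ℝ)) (volume.restrict (Ioc (1:ℝ) c)) :=
      (integrableOn_const measure_Ioc_lt_top.ne)
    exact h1.mul_prod h2
  have hint : Integrable (Function.uncurry fun u s : ℝ => exp (-(u*s)))
      ((volume.restrict (Ioi (0:ℝ))).prod (volume.restrict (Ioc (1:ℝ) c))) := by
    apply Integrable.mono hb hmeas
    rw [Measure.prod_restrict]
    filter_upwards [ae_restrict_mem (measurableSet_Ioi.prod measurableSet_Ioc)] with z hz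
    obtain ⟨hz1, hz2⟩ := hz
    simp only [Function.uncurry, norm_mul, norm_one, Real.norm_eq_abs, abs_exp, mul_one]
    apply Real.exp_le_exp.2
    simp only [neg_le_neg_iff]
    nlinarith [le_of_lt (show (0:ℝ) < z.1 from hz1), hz2.1.le]
  have swap := MeasureTheory.integral_integral_swap hint
  -- inner integral on the left
  have hleft : ∫ u in Ioi (0:ℝ), (∫ s in Ioc (1:ℝ) c, exp (-(u*s))) =
      ∫ u in Ioi (0:ℝ), (exp (-u) - exp (-(c*u)))/u := by
    apply setIntegral_congr_fun measurableSet_Ioi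
    intro u hu
    have hu0 : (0:ℝ) < u := hu
    dsimp only
    have : ∫ s in Ioc (1:ℝ) c, exp (-(u*s)) = ∫ s in (1:ℝ)..c, exp (-(u*s)) := by
      rw [intervalIntegral.integral_of_le hc]
    rw [this]
    have hderiv : ∀ s ∈ uIcc (1:ℝ) c, HasDerivAt (fun s => -(exp (-(u*s))/u)) (exp (-(u*s))) s := by
      intro s _
      have h1 : HasDerivAt (fun s : ℝ => -(u*s)) (-u) s := by
        simpa using ((hasDerivAt_id s).const_mul (-u))
      have h2 : HasDerivAt (fun s : ℝ => exp (-(u*s))) (exp (-(u*s)) * (-u)) s := (Real.hasDerivAt_exp _).comp s h1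
      have h3 := (h2.div_const u).neg
      rw [mul_neg, neg_div, neg_neg, mul_div_assoc, div_self hu0.ne', mul_one] at h3
      exact h3
    rw [intervalIntegral.integral_eq_sub_of_hasDerivAt hderiv (Continuous.intervalIntegrable (by fun_prop) 1 c)]
    field_simp
    ring
  -- inner integral on the right
  have hright : ∫ s in Ioc (1:ℝ) c, (∫ u in Ioi (0:ℝ), exp (-(u*s))) =
      ∫ s in Ioc (1:ℝ) c, s⁻¹ := by
    apply setIntegral_congr_fun measurableSet_Ioc
    intro s hs
    have hs0 : (0:ℝ) < s := lt_of_lt_of_le one_pos hs.1.le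
    dsimp only
    have : ∀ u : ℝ, exp (-(u*s)) = (fun x => exp (-x)) (s * u) := by
      intro u; rw [mul_comm]
    simp_rw [this]
    rw [MeasureTheory.integral_comp_mul_left_Ioi (fun x => exp (-x)) 0 hs0]
    rw [mul_zero, integral_exp_neg_Ioi]
    simp
  have hfin : ∫ s in Ioc (1:ℝ) c, s⁻¹ = Real.log c := by
    rw [← intervalIntegral.integral_of_le hc, integral_inv_of_pos one_pos hc0]
    simp
  rw [← hleft, swap, hright, hfin]

lemma exp_lipschitz {a b : ℝ} (ha : 0 ≤ a) (hb : 0 ≤ b) :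
    |Real.exp (-a) - Real.exp (-b)| ≤ |a - b| := by
  wlog hab : a ≤ b generalizing a b
  · rw [abs_sub_comm, abs_sub_comm a b]; exact this hb ha (le_of_not_ge hab)
  have h1 : Real.exp (-b) ≤ Real.exp (-a) := Real.exp_le_exp.2 (by linarith)
  have h2 : Real.exp (-a) ≤ 1 := Real.exp_le_one_iff.2 (by linarith)
  rw [abs_of_nonneg (by linarith), abs_of_nonpos (by linarith)]
  have h3 : Real.exp (-a) - Real.exp (-b) = Real.exp (-a) * (1 - Real.exp (-(b-a))) := by
    rw [mul_sub, mul_one, ← Real.exp_add]; ring_nf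
  rw [h3]
  have h4 : 1 - Real.exp (-(b-a)) ≤ b - a := by
    have := Real.add_one_le_exp (-(b-a)); linarith
  have h5 : 0 ≤ 1 - Real.exp (-(b-a)) := by
    have : Real.exp (-(b-a)) ≤ 1 := Real.exp_le_one_iff.2 (by linarith)
    linarith
  calc Real.exp (-a) * (1 - Real.exp (-(b-a))) ≤ 1 * (b - a) :=
        mul_le_mul h2 h4 h5 zero_le_one
    _ = -(a - b) := by ring

lemma log_facts {t : ℝ} (ht : 0 < t) :
    0 < Real.log (1+t) ∧ Real.log (1+t) ≤ t ∧ t/(1+t) ≤ Real.log (1+t) := by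
  have h1t : (0:ℝ) < 1 + t := by linarith
  refine ⟨Real.log_pos (by linarith), by have := Real.log_le_sub_one_of_pos h1t; linarith, ?_⟩
  have h2 := Real.log_le_sub_one_of_pos (inv_pos.2 h1t)
  rw [Real.log_inv] at h2
  have h3 : (1+t)⁻¹ - 1 = -(t/(1+t)) := by field_simp; ring
  rw [h3] at h2
  linarith

lemma B_bound {c : ℝ} (hc : 1 ≤ c) {t : ℝ} (ht : 0 < t) :
    |(1+t) ^ (-(c+1)) / Real.log (1+t) - Real.exp (-t)/t| ≤ c + 3 := by
  obtain ⟨hL, hLt, hLlow⟩ := log_facts ht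
  set L := Real.log (1+t) with hLdef
  have h1t : (0:ℝ) < 1 + t := by linarith
  set P := (1+t) ^ (-(c+1)) with hPdef
  have hP0 : 0 < P := Real.rpow_pos_of_pos h1t _
  have hP1 : P ≤ 1 := Real.rpow_le_one_of_one_le_of_nonpos (by linarith) (by linarith)
  have hsplit : P/L - Real.exp (-t)/t = P*(1/L - 1/t) + (P - Real.exp (-t))/t := by
    field_simp
    ring
  have hterm1 : |P*(1/L - 1/t)| ≤ 1 := by
    have hkey : t ≤ L*(1+t) := (div_le_iff₀ h1t).1 hLlow
    have h0 : 0 ≤ 1/L - 1/t := by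
      rw [sub_nonneg]
      exact one_div_le_one_div_of_le hL hLt
    have h1 : 1/L - 1/t ≤ 1 := by
      rw [div_sub_div _ _ hL.ne' ht.ne', div_le_one (by positivity)]
      nlinarith
    rw [abs_mul, abs_of_pos hP0, abs_of_nonneg h0]
    calc P * (1/L - 1/t) ≤ 1 * 1 := mul_le_mul hP1 h1 h0 zero_le_one
      _ = 1 := one_mul 1
  have hterm2 : |(P - Real.exp (-t))/t| ≤ c + 2 := by
    have hPexp : P = Real.exp (-((c+1)*L)) := by
      rw [hPdef, Real.rpow_def_of_pos h1t, ← hLdef]; ring_nf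
    rw [abs_div, abs_of_pos ht, div_le_iff₀ ht, hPexp]
    have h5 : |Real.exp (-((c+1)*L)) - Real.exp (-t)| ≤ |(c+1)*L - t| :=
      exp_lipschitz (by positivity) ht.le
    have h6 : |(c+1)*L - t| ≤ (c+2)*t := by
      rw [abs_le]
      constructor
      · nlinarith
      · nlinarith
    linarith
  calc |P/L - Real.exp (-t)/t| = |P*(1/L - 1/t) + (P - Real.exp (-t))/t| := by rw [hsplit]
    _ ≤ |P*(1/L - 1/t)| + |(P - Real.exp (-t))/t| := abs_add_le _ _
    _ ≤ 1 + (c+2) := add_le_add hterm1 hterm2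
    _ = c + 3 := by ring

lemma meas_fc {c : ℝ} : Measurable (fun t : ℝ => (1+t) ^ (-(c+1)) / Real.log (1+t)) := by
  apply Measurable.div
  · fun_prop
  · exact Real.measurable_log.comp (by fun_prop)

lemma meas_h : Measurable (fun t : ℝ => Real.exp (-t)/t) := by fun_prop

lemma rpow_shift_le {c t : ℝ} (hc : 1 ≤ c) (ht : 0 < t) :
    (1+t) ^ (-(c+1)) ≤ t ^ (-(c+1)) := by
  rw [Real.rpow_neg (by linarith), Real.rpow_neg ht.le]
  apply inv_anti₀ (Real.rpow_pos_of_pos ht _)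
  exact Real.rpow_le_rpow ht.le (by linarith) (by linarith)

lemma fc_integrableOn {c ε : ℝ} (hc : 1 ≤ c) (hε : 0 < ε) :
    IntegrableOn (fun t : ℝ => (1+t) ^ (-(c+1)) / Real.log (1+t)) (Ioi ε) := by
  have hlog : 0 < Real.log (1+ε) := Real.log_pos (by linarith)
  have hdom : IntegrableOn (fun t : ℝ => t ^ (-(c+1)) * (Real.log (1+ε))⁻¹) (Ioi ε) :=
    (integrableOn_Ioi_rpow_of_lt (by linarith) hε).mul_const _
  apply Integrable.mono hdom meas_fc.aestronglyMeasurable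
  filter_upwards [ae_restrict_mem measurableSet_Ioi] with t (ht : ε < t)
  have ht0 : 0 < t := hε.trans ht
  have hP0 : (0:ℝ) < (1+t) ^ (-(c+1)) := Real.rpow_pos_of_pos (by linarith) _
  have hL : Real.log (1+ε) ≤ Real.log (1+t) := Real.log_le_log (by linarith) (by linarith)
  have hpos2 : (0:ℝ) < t ^ (-(c+1)) * (Real.log (1+ε))⁻¹ :=
    mul_pos (Real.rpow_pos_of_pos ht0 _) (inv_pos.2 hlog)
  rw [Real.norm_eq_abs, Real.norm_eq_abs, abs_of_pos (div_pos hP0 (hlog.trans_le hL)),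
    abs_of_pos hpos2]
  rw [div_eq_mul_inv]
  exact mul_le_mul (rpow_shift_le hc ht0) (inv_anti₀ hlog hL)
    (inv_nonneg.2 (hlog.trans_le hL).le) (Real.rpow_pos_of_pos ht0 _).le

lemma h_integrableOn {a : ℝ} (ha : 0 < a) :
    IntegrableOn (fun t : ℝ => Real.exp (-t)/t) (Ioi a) := by
  have hdom : IntegrableOn (fun t : ℝ => Real.exp (-(1:ℝ)*t) * a⁻¹) (Ioi a) :=
    (exp_neg_integrableOn_Ioi a one_pos).mul_const _
  apply Integrable.mono hdom meas_h.aestronglyMeasurable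
  filter_upwards [ae_restrict_mem measurableSet_Ioi] with t (ht : a < t)
  have ht0 : 0 < t := ha.trans ht
  rw [Real.norm_eq_abs, Real.norm_eq_abs, abs_of_pos (by positivity), abs_of_pos (by positivity)]
  rw [neg_one_mul, div_eq_mul_inv]
  exact mul_le_mul_of_nonneg_left (inv_anti₀ ha ht.le) (Real.exp_pos _).le

lemma Fr_integrableOn {c : ℝ} (hc : 1 ≤ c) :
    IntegrableOn (fun u : ℝ => (Real.exp (-(c*u)) - Real.exp (-u))/u) (Ioi (0:ℝ)) := by
  have hmeas : Measurable (fun u : ℝ => (Real.exp (-(c*u)) - Real.exp (-u))/u) := by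
    fun_prop
  rw [← Ioc_union_Ioi_eq_Ioi (zero_le_one)]
  apply IntegrableOn.union
  · apply Measure.integrableOn_of_bounded (M := c - 1) measure_Ioc_lt_top.ne
      hmeas.aestronglyMeasurable
    filter_upwards [ae_restrict_mem measurableSet_Ioc] with u hu
    obtain ⟨hu0, hu1⟩ := hu
    rw [Real.norm_eq_abs, abs_div, abs_of_pos hu0, div_le_iff₀ hu0]
    calc |Real.exp (-(c*u)) - Real.exp (-u)| ≤ |c*u - u| :=
          exp_lipschitz (by positivity) hu0.le
      _ = (c-1)*u := by rw [abs_of_nonneg (by nlinarith)]; ring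
  · have hdom : IntegrableOn (fun u : ℝ => Real.exp (-(1:ℝ)*u) * 2) (Ioi 1) :=
      (exp_neg_integrableOn_Ioi 1 one_pos).mul_const _
    apply Integrable.mono hdom hmeas.aestronglyMeasurable
    filter_upwards [ae_restrict_mem measurableSet_Ioi] with u (hu : 1 < u)
    have hu0 : (0:ℝ) < u := one_pos.trans hu
    rw [Real.norm_eq_abs, Real.norm_eq_abs, neg_one_mul, abs_div, abs_of_pos hu0]
    have hR : |Real.exp (-u) * 2| = Real.exp (-u) * 2 := abs_of_pos (by positivity)
    rw [hR]
    have h1 : |Real.exp (-(c*u)) - Real.exp (-u)| ≤ 2 * Real.exp (-u) := by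
      have e1 : Real.exp (-(c*u)) ≤ Real.exp (-u) := Real.exp_le_exp.2 (by nlinarith)
      rw [abs_le]
      constructor <;> nlinarith [Real.exp_pos (-(c*u)), Real.exp_pos (-u)]
    calc |Real.exp (-(c*u)) - Real.exp (-u)| / u ≤ |Real.exp (-(c*u)) - Real.exp (-u)| := by
          apply div_le_self (abs_nonneg _) hu.le
      _ ≤ 2 * Real.exp (-u) := h1
      _ = Real.exp (-u) * 2 := by ring

lemma B_integrableOn {c : ℝ} (hc : 1 ≤ c) :
    IntegrableOn (fun t : ℝ => (1+t) ^ (-(c+1)) / Real.log (1+t) - Real.exp (-t)/t)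
      (Ioi (0:ℝ)) := by
  rw [← Ioc_union_Ioi_eq_Ioi (zero_le_one)]
  apply IntegrableOn.union
  · apply Measure.integrableOn_of_bounded (M := c + 3) measure_Ioc_lt_top.ne
      (meas_fc.sub meas_h).aestronglyMeasurable
    filter_upwards [ae_restrict_mem measurableSet_Ioc] with t ht
    exact B_bound hc ht.1
  · exact (fc_integrableOn hc one_pos).sub (h_integrableOn one_pos)
lemma B_value {c : ℝ} (hc : 1 ≤ c) :
    ∫ t in Ioi (0:ℝ), ((1+t) ^ (-(c+1)) / Real.log (1+t) - Real.exp (-t)/t) =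
      - Real.log c := by
  set B := fun t : ℝ => (1+t) ^ (-(c+1)) / Real.log (1+t) - Real.exp (-t)/t with hB
  set Fr := fun u : ℝ => (Real.exp (-(c*u)) - Real.exp (-u))/u with hFr
  have hId : ∀ ε : ℝ, 0 < ε → ∫ t in Ioi ε, B t =
      (∫ u in Ioi (Real.log (1+ε)), Fr u) +
        ∫ u in Ioc (Real.log (1+ε)) ε, Real.exp (-u)/u := by
    intro ε hε
    obtain ⟨hδ0, hδε, hδlow⟩ := log_facts hε
    set δ := Real.log (1+ε) with hδdef
    have step1 : ∫ t in Ioi ε, B t =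
        (∫ t in Ioi ε, (1+t) ^ (-(c+1)) / Real.log (1+t)) - ∫ t in Ioi ε, Real.exp (-t)/t :=
      integral_sub (fc_integrableOn hc hε) (h_integrableOn hε)
    have himg : (fun u : ℝ => Real.exp u - 1) '' (Ioi δ) = Ioi ε := by
      ext x
      constructor
      · rintro ⟨v, hv, rfl⟩
        have h2 : Real.exp δ < Real.exp v := Real.exp_lt_exp.2 hv
        rw [hδdef, Real.exp_log (by linarith)] at h2
        show ε < Real.exp v - 1
        linarith
      · intro hx
        have hx' : (ε:ℝ) < x := hx
        refine ⟨Real.log (1+x), ?_, ?_⟩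
        · show δ < Real.log (1+x)
          exact Real.log_lt_log (by linarith) (by linarith)
        · show Real.exp (Real.log (1+x)) - 1 = x
          rw [Real.exp_log (by linarith)]; ring
    have step2 : ∫ t in Ioi ε, (1+t) ^ (-(c+1)) / Real.log (1+t) =
        ∫ u in Ioi δ, Real.exp (-(c*u))/u := by
      rw [← himg, integral_image_eq_integral_abs_deriv_smul measurableSet_Ioi
        (fun x _ => ((Real.hasDerivAt_exp x).sub_const 1).hasDerivWithinAt)
        (fun x _ y _ h => Real.exp_eq_exp.1 (by linarith)) _]
      apply setIntegral_congr_fun measurableSet_Ioi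
      intro u (hu : δ < u)
      have hu0 : 0 < u := hδ0.trans hu
      have h1 : (1:ℝ) + (Real.exp u - 1) = Real.exp u := by ring
      dsimp only
      rw [h1, Real.log_exp, smul_eq_mul, abs_of_pos (Real.exp_pos u),
        Real.rpow_def_of_pos (Real.exp_pos u), Real.log_exp, ← mul_div_assoc,
        ← Real.exp_add]
      congr 2
      ring
    have step3 : ∫ u in Ioi δ, Real.exp (-(c*u))/u =
        (∫ u in Ioi δ, Fr u) + ∫ u in Ioi δ, Real.exp (-u)/u := by
      rw [← integral_add ((Fr_integrableOn hc).mono_set (Ioi_subset_Ioi hδ0.le))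
        (h_integrableOn hδ0)]
      apply setIntegral_congr_fun measurableSet_Ioi
      intro u (hu : δ < u)
      dsimp only [hFr]
      have hu0 : u ≠ 0 := (hδ0.trans hu).ne'
      field_simp
      ring
    have step4 : ∫ u in Ioi δ, Real.exp (-u)/u =
        (∫ u in Ioc δ ε, Real.exp (-u)/u) + ∫ u in Ioi ε, Real.exp (-u)/u := by
      rw [← Set.Ioc_union_Ioi_eq_Ioi hδε]
      exact setIntegral_union (Set.Ioc_disjoint_Ioi le_rfl) measurableSet_Ioi
        ((h_integrableOn hδ0).mono_set Set.Ioc_subset_Ioi_self) (h_integrableOn hε)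
    rw [step1, step2, step3, step4]
    ring
  -- limits
  have hδtend : Tendsto (fun ε : ℝ => Real.log (1+ε)) (nhdsWithin 0 (Ioi 0))
      (nhdsWithin 0 (Ioi 0)) := by
    apply tendsto_nhdsWithin_of_tendsto_nhds_of_eventually_within
    · have hcont : ContinuousAt (fun ε : ℝ => Real.log (1+ε)) 0 :=
        (Real.continuousAt_log (by norm_num)).comp (by fun_prop)
      have h0 : Tendsto (fun ε : ℝ => Real.log (1+ε)) (nhds 0) (nhds 0) := by
        simpa using hcont.tendsto
      exact h0.mono_left nhdsWithin_le_nhds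
    · filter_upwards [self_mem_nhdsWithin] with ε (hε : 0 < ε)
      exact (log_facts hε).1
  have hFrTend : Tendsto (fun ε : ℝ => ∫ u in Ioi (Real.log (1+ε)), Fr u)
      (nhdsWithin 0 (Ioi 0)) (nhds (∫ u in Ioi (0:ℝ), Fr u)) :=
    (tendsto_setIntegral_Ioi (Fr_integrableOn hc)).comp hδtend
  have hFrVal : ∫ u in Ioi (0:ℝ), Fr u = - Real.log c := by
    rw [← frullani_exp hc, ← integral_neg]
    apply setIntegral_congr_fun measurableSet_Ioi
    intro u _
    dsimp only [hFr]
    ring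
  have hTailTend : Tendsto (fun ε : ℝ => ∫ u in Ioc (Real.log (1+ε)) ε, Real.exp (-u)/u)
      (nhdsWithin 0 (Ioi 0)) (nhds 0) := by
    have hlogtend : Tendsto (fun ε : ℝ => Real.log (1+ε)) (nhdsWithin 0 (Ioi 0)) (nhds 0) :=
      hδtend.mono_right nhdsWithin_le_nhds
    apply tendsto_of_tendsto_of_tendsto_of_le_of_le' tendsto_const_nhds hlogtend
    · filter_upwards [self_mem_nhdsWithin] with ε (hε : 0 < ε)
      obtain ⟨hδ0, hδε, hδlow⟩ := log_facts hε
      apply setIntegral_nonneg measurableSet_Ioc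
      intro u hu
      have : 0 < u := hδ0.trans_le hu.1.le
      positivity
    · filter_upwards [self_mem_nhdsWithin] with ε (hε : 0 < ε)
      obtain ⟨hδ0, hδε, hδlow⟩ := log_facts hε
      set δ := Real.log (1+ε) with hδdef
      have hinv : IntegrableOn (fun u : ℝ => u⁻¹) (Ioc δ ε) := by
        apply Measure.integrableOn_of_bounded (M := δ⁻¹) measure_Ioc_lt_top.ne
          measurable_inv.aestronglyMeasurable
        filter_upwards [ae_restrict_mem measurableSet_Ioc] with u hu
        rw [Real.norm_eq_abs, abs_of_pos (inv_pos.2 (hδ0.trans_le hu.1.le))]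
        exact inv_anti₀ hδ0 hu.1.le
      have hmono : ∫ u in Ioc δ ε, Real.exp (-u)/u ≤ ∫ u in Ioc δ ε, u⁻¹ := by
        apply setIntegral_mono_on
          ((h_integrableOn hδ0).mono_set Set.Ioc_subset_Ioi_self) hinv measurableSet_Ioc
        intro u hu
        have hu0 : 0 < u := hδ0.trans_le hu.1.le
        rw [div_eq_mul_inv]
        calc Real.exp (-u) * u⁻¹ ≤ 1 * u⁻¹ :=
              mul_le_mul_of_nonneg_right (Real.exp_le_one_iff.2 (by linarith))
                (inv_nonneg.2 hu0.le)
          _ = u⁻¹ := one_mul _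
      have hval : ∫ u in Ioc δ ε, (u:ℝ)⁻¹ = Real.log (ε/δ) := by
        rw [← intervalIntegral.integral_of_le hδε, integral_inv_of_pos hδ0 hε]
      have hratio : ε/δ ≤ 1+ε := by
        rw [div_le_iff₀ hδ0]
        have := (div_le_iff₀ (show (0:ℝ) < 1+ε by linarith)).1 hδlow
        linarith
      calc ∫ u in Ioc δ ε, Real.exp (-u)/u ≤ ∫ u in Ioc δ ε, (u:ℝ)⁻¹ := hmono
        _ = Real.log (ε/δ) := hval
        _ ≤ Real.log (1+ε) := Real.log_le_log (div_pos hε hδ0) hratio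
  have h1 : Tendsto (fun ε : ℝ => ∫ t in Ioi ε, B t) (nhdsWithin 0 (Ioi 0))
      (nhds (∫ t in Ioi (0:ℝ), B t)) := tendsto_setIntegral_Ioi (B_integrableOn hc)
  have h2 : Tendsto (fun ε : ℝ => ∫ t in Ioi ε, B t) (nhdsWithin 0 (Ioi 0))
      (nhds (- Real.log c)) := by
    have := hFrTend.add hTailTend
    rw [hFrVal, add_zero] at this
    apply this.congr'
    filter_upwards [self_mem_nhdsWithin] with ε (hε : 0 < ε)
    exact (hId ε hε).symm
  exact tendsto_nhds_unique h1 h2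
lemma sum_rpow_Ico (a b : ℕ) {t : ℝ} (hab : a ≤ b) (ht : 0 < t) :
    ∑ k ∈ Finset.Ico a b, (1+t) ^ (-((k:ℝ)+1)) =
      ((1+t) ^ (-(a:ℝ)) - (1+t) ^ (-(b:ℝ)))/t := by
  have h0 : (0:ℝ) < 1 + t := by linarith
  set r := (1+t)⁻¹ with hrdef
  have hr0 : 0 < r := inv_pos.2 h0
  have hr1 : r < 1 := by
    rw [hrdef, inv_lt_one_iff₀]
    right; linarith
  have key : ∀ m : ℕ, (1+t) ^ (-(m:ℝ)) = r ^ m := by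
    intro m
    rw [Real.rpow_neg h0.le, Real.rpow_natCast, hrdef, inv_pow]
  have hconv : ∀ k : ℕ, (1+t) ^ (-((k:ℝ)+1)) = r ^ k * r := by
    intro k
    have h2 : -((k:ℝ)+1) = -(((k+1:ℕ)):ℝ) := by push_cast; ring
    rw [h2, key, pow_succ]
  have hrm : r - 1 = -(t*r) := by
    rw [hrdef]
    field_simp
    ring
  calc ∑ k ∈ Finset.Ico a b, (1+t) ^ (-((k:ℝ)+1))
      = ∑ k ∈ Finset.Ico a b, r^k * r := Finset.sum_congr rfl (fun k _ => hconv k)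
    _ = (∑ k ∈ Finset.Ico a b, r^k) * r := by rw [Finset.sum_mul]
    _ = ((r^b - r^a)/(r-1)) * r := by rw [geom_sum_Ico hr1.ne hab]
    _ = ((1+t) ^ (-(a:ℝ)) - (1+t) ^ (-(b:ℝ)))/t := by
        rw [key a, key b, hrm]
        field_simp
        ring

lemma W_eq (n : ℕ) (hn : 0 < n) {t : ℝ} (ht : 0 < t) :
    (((1 + t) ^ (-2 * (n : ℝ)) - (1 + t) ^ (-(n : ℝ)) - (1 + t) ^ (-(n : ℝ) - 2) +
        (1 + t) ^ (-1 : ℝ)) / Real.log (1 + t) - Real.exp (-t)) / t =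
      (∑ k ∈ Finset.Ico 1 (n+2),
          ((1+t) ^ (-((k:ℝ)+1)) / Real.log (1+t) - Real.exp (-t)/t)) -
      ∑ k ∈ Finset.Ico n (2*n),
          ((1+t) ^ (-((k:ℝ)+1)) / Real.log (1+t) - Real.exp (-t)/t) := by
  obtain ⟨hL, _, _⟩ := log_facts ht
  set L := Real.log (1+t) with hLdef
  have e1 : ∀ a b : ℕ, a ≤ b →
      ∑ k ∈ Finset.Ico a b, ((1+t) ^ (-((k:ℝ)+1)) / L - Real.exp (-t)/t) =
        (((1+t) ^ (-(a:ℝ)) - (1+t) ^ (-(b:ℝ)))/t) / L -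
          ((b - a : ℕ) : ℝ) * (Real.exp (-t)/t) := by
    intro a b hab
    rw [Finset.sum_sub_distrib, ← Finset.sum_div, sum_rpow_Ico a b hab ht,
      Finset.sum_const, Nat.card_Ico, nsmul_eq_mul]
  rw [e1 1 (n+2) (by omega), e1 n (2*n) (by omega)]
  have c1 : (1+t) ^ (-((1:ℕ):ℝ)) = (1+t) ^ (-1 : ℝ) := by norm_num
  have c2 : (1+t) ^ (-((n+2:ℕ):ℝ)) = (1+t) ^ (-(n:ℝ)-2) := by
    congr 1; push_cast; ring
  have c3 : (1+t) ^ (-((2*n:ℕ):ℝ)) = (1+t) ^ (-2*(n:ℝ)) := by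
    congr 1; push_cast; ring
  rw [c1, c2, c3]
  have cc1 : ((n+2-1 : ℕ) : ℝ) = (n:ℝ) + 1 := by
    have : n+2-1 = n+1 := by omega
    rw [this]; push_cast; ring
  have cc2 : ((2*n-n : ℕ) : ℝ) = (n:ℝ) := by
    have : 2*n-n = n := by omega
    rw [this]
  rw [cc1, cc2]
  field_simp
  ring

theorem catalan_integral_alt (n : ℕ) (hn : 0 < n) :
    (catalan n : ℝ) =
      2 * Real.exp (∫ t in Set.Ioi (0 : ℝ),
        (((1 + t) ^ (-2 * (n : ℝ)) - (1 + t) ^ (-(n : ℝ)) - (1 + t) ^ (-(n : ℝ) - 2) +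
            (1 + t) ^ (-1 : ℝ)) / Real.log (1 + t) - Real.exp (-t)) / t) := by
  have hc1 : ∀ k : ℕ, k ∈ Finset.Ico 1 (n+2) → (1:ℝ) ≤ (k:ℝ) := by
    intro k hk
    exact_mod_cast (Finset.mem_Ico.1 hk).1
  have hc2 : ∀ k : ℕ, k ∈ Finset.Ico n (2*n) → (1:ℝ) ≤ (k:ℝ) := by
    intro k hk
    have : 1 ≤ k := le_trans hn (Finset.mem_Ico.1 hk).1
    exact_mod_cast this
  -- compute the integral
  have hI : (∫ t in Ioi (0:ℝ),
      (((1 + t) ^ (-2 * (n : ℝ)) - (1 + t) ^ (-(n : ℝ)) - (1 + t) ^ (-(n : ℝ) - 2) +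
          (1 + t) ^ (-1 : ℝ)) / Real.log (1 + t) - Real.exp (-t)) / t) =
      (∑ k ∈ Finset.Ico n (2*n), Real.log k) - ∑ k ∈ Finset.Ico 1 (n+2), Real.log k := by
    have hcongr : (∫ t in Ioi (0:ℝ),
        (((1 + t) ^ (-2 * (n : ℝ)) - (1 + t) ^ (-(n : ℝ)) - (1 + t) ^ (-(n : ℝ) - 2) +
            (1 + t) ^ (-1 : ℝ)) / Real.log (1 + t) - Real.exp (-t)) / t) =
        ∫ t in Ioi (0:ℝ),
          ((∑ k ∈ Finset.Ico 1 (n+2),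
            ((1+t) ^ (-((k:ℝ)+1)) / Real.log (1+t) - Real.exp (-t)/t)) -
          ∑ k ∈ Finset.Ico n (2*n),
            ((1+t) ^ (-((k:ℝ)+1)) / Real.log (1+t) - Real.exp (-t)/t)) :=
      setIntegral_congr_fun measurableSet_Ioi (fun t ht => W_eq n hn ht)
    have hS1 : IntegrableOn (fun t : ℝ => ∑ k ∈ Finset.Ico 1 (n+2),
        ((1+t) ^ (-((k:ℝ)+1)) / Real.log (1+t) - Real.exp (-t)/t)) (Ioi 0) :=
      integrable_finset_sum _ (fun k hk => B_integrableOn (hc1 k hk))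
    have hS2 : IntegrableOn (fun t : ℝ => ∑ k ∈ Finset.Ico n (2*n),
        ((1+t) ^ (-((k:ℝ)+1)) / Real.log (1+t) - Real.exp (-t)/t)) (Ioi 0) :=
      integrable_finset_sum _ (fun k hk => B_integrableOn (hc2 k hk))
    rw [hcongr, integral_sub hS1 hS2,
      integral_finset_sum _ (fun k hk => B_integrableOn (hc1 k hk)),
      integral_finset_sum _ (fun k hk => B_integrableOn (hc2 k hk))]
    rw [Finset.sum_congr rfl (fun k hk => B_value (hc1 k hk)),
      Finset.sum_congr rfl (fun k hk => B_value (hc2 k hk))]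
    simp only [Finset.sum_neg_distrib]
    ring
  rw [hI, Real.exp_sub, Real.exp_sum, Real.exp_sum]
  have hprod1 : ∀ (s : Finset ℕ), (∀ k ∈ s, 1 ≤ k) →
      ∏ k ∈ s, Real.exp (Real.log k) = ((∏ k ∈ s, k : ℕ) : ℝ) := by
    intro s hs
    rw [Nat.cast_prod]
    apply Finset.prod_congr rfl
    intro k hk
    rw [Real.exp_log]
    have : 1 ≤ k := hs k hk
    exact_mod_cast Nat.lt_of_lt_of_le zero_lt_one this
  rw [hprod1 _ (fun k hk => le_trans hn (Finset.mem_Ico.1 hk).1),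
    hprod1 _ (fun k hk => (Finset.mem_Ico.1 hk).1)]
  -- nat facts
  have hfac1 : ∏ k ∈ Finset.Ico 1 (n+2), k = (n+1).factorial :=
    Finset.prod_Ico_id_eq_factorial (n+1)
  have hfac2 : (n-1).factorial * (∏ k ∈ Finset.Ico n (2*n), k) = (2*n-1).factorial := by
    have h1 : ∏ k ∈ Finset.Ico 1 n, k = (n-1).factorial := by
      conv_lhs => rw [show n = n - 1 + 1 by omega]
      exact Finset.prod_Ico_id_eq_factorial (n-1)
    have h2 : ∏ k ∈ Finset.Ico 1 (2*n), k = (2*n-1).factorial := by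
      conv_lhs => rw [show 2*n = 2*n - 1 + 1 by omega]
      exact Finset.prod_Ico_id_eq_factorial (2*n-1)
    rw [← h1, ← h2]
    exact Finset.prod_Ico_consecutive _ hn (by omega)
  have hcat : (n+1).factorial * ((n-1).factorial * catalan n) = 2 * (2*n-1).factorial := by
    apply Nat.eq_of_mul_eq_mul_left hn
    calc n * ((n+1).factorial * ((n-1).factorial * catalan n))
        = (n+1).factorial * (n * (n-1).factorial) * catalan n := by ring
      _ = (n+1).factorial * n.factorial * catalan n := by rw [Nat.mul_factorial_pred hn.ne']
      _ = (n.factorial * n.factorial) * ((n+1) * catalan n) := by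
          rw [Nat.factorial_succ]; ring
      _ = (n.factorial * n.factorial) * Nat.centralBinom n := by
          rw [succ_mul_catalan_eq_centralBinom]
      _ = (2*n).choose n * n.factorial * (2*n - n).factorial := by
          rw [Nat.centralBinom]
          have : 2*n - n = n := by omega
          rw [this]; ring
      _ = (2*n).factorial := Nat.choose_mul_factorial_mul_factorial (by omega)
      _ = 2*n * (2*n-1).factorial := by
          rw [← Nat.mul_factorial_pred (by omega : 2*n ≠ 0)]
      _ = n * (2 * (2*n-1).factorial) := by ring
  -- cast and finish
  have A : ((n-1).factorial : ℝ) * ((∏ k ∈ Finset.Ico n (2*n), k : ℕ) : ℝ) =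
      ((2*n-1).factorial : ℝ) := by exact_mod_cast hfac2
  have Ck : ((n+1).factorial : ℝ) * (((n-1).factorial : ℝ) * (catalan n : ℝ)) =
      2 * ((2*n-1).factorial : ℝ) := by exact_mod_cast hcat
  have hBf : ((∏ k ∈ Finset.Ico 1 (n+2), k : ℕ) : ℝ) = ((n+1).factorial : ℝ) := by
    exact_mod_cast hfac1
  rw [hBf]
  have hf1 : ((n+1).factorial : ℝ) ≠ 0 := by
    exact_mod_cast (Nat.factorial_pos (n+1)).ne'
  have hf2 : ((n-1).factorial : ℝ) ≠ 0 := by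
    exact_mod_cast (Nat.factorial_pos (n-1)).ne'
  have hP2 : ((∏ k ∈ Finset.Ico n (2*n), k : ℕ) : ℝ) =
      ((2*n-1).factorial : ℝ) / ((n-1).factorial : ℝ) := by
    rw [eq_div_iff hf2]
    linear_combination A
  rw [hP2]
  field_simp
  linear_combination Ck
end

section
/- For every real x > 0, log Γ(x) = ∫₀^∞ [ (x-1) e^{-t} + (e^{-xt} - e^{-t})/(1 - e^{-t}) ] (dt/t) (the Malmstén integral representation of log Γ). -/
open Real MeasureTheory Set

namespace MalmstenAux

noncomputable def f (x t : ℝ) : ℝ :=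
  ((x - 1) * Real.exp (-t) +
    (Real.exp (-x * t) - Real.exp (-t)) / (1 - Real.exp (-t))) / t

lemma one_sub_exp_pos {t : ℝ} (ht : 0 < t) : 0 < 1 - Real.exp (-t) := by
  have : Real.exp (-t) < 1 := by
    rw [Real.exp_lt_one_iff]; linarith
  linarith

lemma contAt {x t : ℝ} (ht : 0 < t) : ContinuousAt (f x) t := by
  have h1 : 1 - Real.exp (-t) ≠ 0 := (one_sub_exp_pos ht).ne'
  unfold f
  apply ContinuousAt.div _ continuousAt_id ht.ne'
  apply ContinuousAt.add (by fun_prop)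
  exact ContinuousAt.div (by fun_prop) (by fun_prop) h1

lemma meas (x : ℝ) {s : Set ℝ} (hs : MeasurableSet s) (hsub : s ⊆ Ioi 0) :
    AEStronglyMeasurable (f x) (volume.restrict s) := by
  have hc : ContinuousOn (f x) s := fun t ht => (contAt (hsub ht)).continuousWithinAt
  exact hc.aestronglyMeasurable hs

lemma one_sub_exp_ge {t : ℝ} (ht : 0 < t) (ht1 : t ≤ 1) : t / 2 ≤ 1 - Real.exp (-t) := by
  have h1 : 1 + t ≤ Real.exp t := by linarith [Real.add_one_le_exp t]
  have h2 : Real.exp (-t) ≤ 1 / (1 + t) := by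
    rw [Real.exp_neg]
    apply inv_le_of_inv_le₀ (by positivity)
    · rw [one_div, inv_inv]; exact h1
  have h3 : 1 / (1 + t) ≤ 1 - t / 2 := by
    rw [div_le_iff₀ (by linarith)]
    nlinarith
  linarith

lemma integrableOn {x : ℝ} (hx : 0 < x) : IntegrableOn (f x) (Ioi 0) := by
  set s : ℝ := x - 1 with hs
  set δ : ℝ := min 1 (1 / (|s| + 1)) with hδdef
  have habs : 0 ≤ |s| := abs_nonneg s
  have hδ : 0 < δ := lt_min one_pos (by positivity)
  have hδ1 : δ ≤ 1 := min_le_left _ _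
  have hδ2 : δ ≤ 1 / (|s| + 1) := min_le_right _ _
  have part1 : IntegrableOn (f x) (Ioc 0 δ) := by
    apply Integrable.mono' (integrable_const (2 * (s ^ 2 + |s|)))
      (meas x measurableSet_Ioc Ioc_subset_Ioi_self)
    filter_upwards [ae_restrict_mem measurableSet_Ioc] with t ht
    obtain ⟨ht0, htδ⟩ := ht
    have ht1 : t ≤ 1 := htδ.trans hδ1
    have hst : |s * t| ≤ 1 := by
      rw [abs_mul, abs_of_pos ht0]
      calc |s| * t ≤ |s| * (1 / (|s| + 1)) := by
            apply mul_le_mul_of_nonneg_left (htδ.trans hδ2) habs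
        _ ≤ 1 := by
            rw [mul_one_div, div_le_one (by positivity)]; linarith
    have h1 : 1 - Real.exp (-t) ≠ 0 := (one_sub_exp_pos ht0).ne'
    have hsplit : Real.exp (-x * t) = Real.exp (-t) * Real.exp (-(s * t)) := by
      rw [← Real.exp_add]; congr 1; rw [hs]; ring
    have key : f x t = Real.exp (-t) *
        ((Real.exp (-(s * t)) - 1 + s * t) - s * (Real.exp (-t) - 1 + t)) /
          ((1 - Real.exp (-t)) * t) := by
      unfold f
      rw [hsplit]
      rw [← hs]
      field_simp
      ring
    have hφ1 : |Real.exp (-(s * t)) - 1 + s * t| ≤ (s * t) ^ 2 := by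
      have := Real.abs_exp_sub_one_sub_id_le (x := -(s * t)) (by rwa [abs_neg])
      rw [sub_neg_eq_add, neg_sq] at this
      exact this
    have hφ2 : |Real.exp (-t) - 1 + t| ≤ t ^ 2 := by
      have := Real.abs_exp_sub_one_sub_id_le (x := -t)
        (by rw [abs_neg, abs_of_pos ht0]; exact ht1)
      rw [sub_neg_eq_add, neg_sq] at this
      exact this
    have hnum : |Real.exp (-t) *
        ((Real.exp (-(s * t)) - 1 + s * t) - s * (Real.exp (-t) - 1 + t))|
        ≤ (s ^ 2 + |s|) * t ^ 2 := by
      rw [abs_mul, abs_exp]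
      have hexp1 : Real.exp (-t) ≤ 1 := Real.exp_le_one_iff.2 (by linarith)
      calc Real.exp (-t) * |(Real.exp (-(s * t)) - 1 + s * t) - s * (Real.exp (-t) - 1 + t)|
          ≤ 1 * (|Real.exp (-(s * t)) - 1 + s * t| + |s * (Real.exp (-t) - 1 + t)|) := by
            apply mul_le_mul hexp1 (abs_sub _ _) (abs_nonneg _) zero_le_one
        _ = |Real.exp (-(s * t)) - 1 + s * t| + |s| * |Real.exp (-t) - 1 + t| := by
            rw [one_mul, abs_mul]
        _ ≤ (s * t) ^ 2 + |s| * t ^ 2 := by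
            have := mul_le_mul_of_nonneg_left hφ2 habs
            linarith
        _ ≤ (s ^ 2 + |s|) * t ^ 2 := by nlinarith [sq_abs s]
    have hden : t ^ 2 / 2 ≤ (1 - Real.exp (-t)) * t := by
      have := one_sub_exp_ge ht0 ht1
      nlinarith
    have hdenpos : 0 < t ^ 2 / 2 := by positivity
    rw [Real.norm_eq_abs, key, abs_div, abs_of_pos (mul_pos (one_sub_exp_pos ht0) ht0)]
    calc |Real.exp (-t) * ((Real.exp (-(s * t)) - 1 + s * t) - s * (Real.exp (-t) - 1 + t))| /
          ((1 - Real.exp (-t)) * t)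
        ≤ ((s ^ 2 + |s|) * t ^ 2) / (t ^ 2 / 2) := by
          apply div_le_div₀ (by positivity) hnum hdenpos hden
      _ = 2 * (s ^ 2 + |s|) := by field_simp
  have hd1 : 0 < 1 - Real.exp (-δ) := one_sub_exp_pos hδ
  have part2 : IntegrableOn (f x) (Ioi δ) := by
    have h1 : IntegrableOn (fun t => Real.exp (-t)) (Ioi δ) := by
      simpa using exp_neg_integrableOn_Ioi δ one_pos
    have h2 : IntegrableOn (fun t => Real.exp (-x * t)) (Ioi δ) :=
      exp_neg_integrableOn_Ioi δ hx
    apply Integrable.mono'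
      (g := fun t => (|s| * Real.exp (-t) +
        (Real.exp (-x * t) + Real.exp (-t)) / (1 - Real.exp (-δ))) / δ)
      (((h1.const_mul |s|).add ((h2.add h1).div_const _)).div_const δ)
      (meas x measurableSet_Ioi (Ioi_subset_Ioi hδ.le))
    filter_upwards [ae_restrict_mem measurableSet_Ioi] with t ht
    have ht0 : 0 < t := hδ.trans ht
    have h1t : 0 < 1 - Real.exp (-t) := one_sub_exp_pos ht0
    have het : Real.exp (-t) ≤ Real.exp (-δ) := Real.exp_le_exp.2 (by linarith [le_of_lt (mem_Ioi.1 ht)])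
    have hN : |(x - 1) * Real.exp (-t) +
        (Real.exp (-x * t) - Real.exp (-t)) / (1 - Real.exp (-t))|
        ≤ |s| * Real.exp (-t) +
          (Real.exp (-x * t) + Real.exp (-t)) / (1 - Real.exp (-δ)) := by
      apply (abs_add_le _ _).trans
      apply add_le_add
      · rw [abs_mul, abs_exp, ← hs]
      · rw [abs_div, abs_of_pos h1t]
        apply div_le_div₀ (by positivity)
          ((abs_sub _ _).trans (by rw [abs_exp, abs_exp]))
          hd1 (by linarith)
    rw [Real.norm_eq_abs]
    unfold f
    rw [abs_div, abs_of_pos ht0]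
    exact div_le_div₀ (by positivity) hN hδ (le_of_lt ht)
  have := part1.union part2
  rwa [Ioc_union_Ioi_eq_Ioi hδ.le] at this

lemma frullani_aux {a b : ℝ} (ha : 0 < a) (hab : a ≤ b) :
    IntegrableOn (fun t => (Real.exp (-(a * t)) - Real.exp (-(b * t))) / t) (Ioi 0) ∧
      ∫ t in Ioi 0, (Real.exp (-(a * t)) - Real.exp (-(b * t))) / t
        = Real.log b - Real.log a := by
  have hb : 0 < b := ha.trans_le hab
  set μ : Measure ℝ := volume.restrict (Ioi 0)
  set ν : Measure ℝ := volume.restrict (Ioc a b)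
  have hGmeas : AEStronglyMeasurable (Function.uncurry fun t s => Real.exp (-(s * t)))
      (μ.prod ν) := by
    apply Continuous.aestronglyMeasurable
    fun_prop
  have hGint : Integrable (Function.uncurry fun t s => Real.exp (-(s * t))) (μ.prod ν) := by
    have hbd : Integrable (fun p : ℝ × ℝ => Real.exp (-a * p.1) * (1 : ℝ)) (μ.prod ν) :=
      Integrable.mul_prod (exp_neg_integrableOn_Ioi 0 ha) (integrableOn_const measure_Ioc_lt_top.ne)
    apply Integrable.mono' hbd hGmeas
    have hae : ∀ᵐ p ∂(μ.prod ν), p ∈ (Ioi (0:ℝ)) ×ˢ (Ioc a b) := by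
      rw [Measure.prod_restrict]
      exact ae_restrict_mem (measurableSet_Ioi.prod measurableSet_Ioc)
    filter_upwards [hae] with p hp
    simp only [Function.uncurry, Real.norm_eq_abs, Real.abs_exp, mul_one, neg_mul]
    apply Real.exp_le_exp.2
    apply neg_le_neg
    exact mul_le_mul_of_nonneg_right hp.2.1.le (le_of_lt hp.1)
  have inner1 : ∀ t ∈ Ioi (0:ℝ), (∫ s in Ioc a b, Real.exp (-(s * t)))
      = (Real.exp (-(a * t)) - Real.exp (-(b * t))) / t := by
    intro t ht
    have ht0 : (0:ℝ) < t := ht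
    rw [← intervalIntegral.integral_of_le hab]
    have e1 : (∫ s in a..b, Real.exp (-(s * t))) = ∫ s in a..b, Real.exp (-t * s) :=
      intervalIntegral.integral_congr fun s _ => by rw [show -(s * t) = -t * s by ring]
    rw [e1, intervalIntegral.integral_comp_mul_left (fun u => Real.exp u)
      (neg_ne_zero.2 ht0.ne'), integral_exp, smul_eq_mul]
    rw [show -t * b = -(b * t) by ring, show -t * a = -(a * t) by ring, inv_neg, neg_mul,
      ← mul_neg, neg_sub, inv_mul_eq_div]
  have inner2 : ∀ s : ℝ, 0 < s → (∫ t in Ioi (0:ℝ), Real.exp (-(s * t))) = 1 / s := by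
    intro s hs
    have := integral_comp_mul_left_Ioi (fun u => Real.exp (-u)) 0 hs
    rw [mul_zero] at this
    rw [this, integral_exp_neg_Ioi]
    simp
  constructor
  · apply (hGint.integral_prod_left).congr
    filter_upwards [ae_restrict_mem measurableSet_Ioi] with t ht
    exact inner1 t ht
  · have hswap := integral_integral_swap hGint
    have lhs_eq : (∫ t, (∫ s, Real.exp (-(s * t)) ∂ν) ∂μ)
        = ∫ t in Ioi 0, (Real.exp (-(a * t)) - Real.exp (-(b * t))) / t :=
      setIntegral_congr_fun measurableSet_Ioi fun t ht => inner1 t ht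
    have rhs_eq : (∫ s, (∫ t, Real.exp (-(s * t)) ∂μ) ∂ν) = Real.log b - Real.log a := by
      have e2 : (∫ s, (∫ t, Real.exp (-(s * t)) ∂μ) ∂ν) = ∫ s in Ioc a b, 1 / s :=
        setIntegral_congr_fun measurableSet_Ioc fun s hs => inner2 s (ha.trans_le hs.1.le)
      rw [e2, ← intervalIntegral.integral_of_le hab, integral_one_div, Real.log_div hb.ne' ha.ne']
      rw [uIcc_of_le hab]
      rintro ⟨h0, -⟩
      linarith
    rw [← lhs_eq, hswap, rhs_eq]

lemma frullani {a b : ℝ} (ha : 0 < a) (hb : 0 < b) :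
    IntegrableOn (fun t => (Real.exp (-(a * t)) - Real.exp (-(b * t))) / t) (Ioi 0) ∧
      ∫ t in Ioi 0, (Real.exp (-(a * t)) - Real.exp (-(b * t))) / t
        = Real.log b - Real.log a := by
  rcases le_total a b with hab | hab
  · exact frullani_aux ha hab
  · obtain ⟨h1, h2⟩ := frullani_aux hb hab
    have hfun : (fun t : ℝ => (Real.exp (-(a * t)) - Real.exp (-(b * t))) / t)
        = fun t => -((Real.exp (-(b * t)) - Real.exp (-(a * t))) / t) := by
      funext t; rw [← neg_div, neg_sub]
    constructor
    · rw [hfun]; exact h1.neg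
    · rw [hfun, integral_neg, h2]; ring

lemma F_rec {y : ℝ} (hy : 0 < y) :
    (∫ t in Ioi 0, f (y + 1) t) = (∫ t in Ioi 0, f y t) + Real.log y := by
  obtain ⟨h1, h2⟩ := frullani one_pos hy
  have heq : ∀ t ∈ Ioi (0:ℝ), f (y + 1) t
      = f y t + (Real.exp (-(1 * t)) - Real.exp (-(y * t))) / t := by
    intro t ht
    have ht0 : (0:ℝ) < t := ht
    have hne : 1 - Real.exp (-t) ≠ 0 := (one_sub_exp_pos ht0).ne'
    have hsplit : Real.exp (-(y + 1) * t) = Real.exp (-y * t) * Real.exp (-t) := by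
      rw [← Real.exp_add]; congr 1; ring
    unfold f
    rw [hsplit, show -(1 * t) = -t by ring, show -(y * t) = -y * t by ring]
    field_simp
    ring
  rw [setIntegral_congr_fun measurableSet_Ioi heq,
    integral_add (integrableOn hy) h1, h2, Real.log_one, sub_zero]

lemma F_one : (∫ t in Ioi (0:ℝ), f 1 t) = 0 := by
  have : ∀ t : ℝ, f 1 t = 0 := by
    intro t
    unfold f
    rw [show -(1:ℝ) * t = -t by ring]
    simp
  simp [this]

lemma F_convex : ConvexOn ℝ (Ioi 0) (fun x => ∫ t in Ioi 0, f x t) := by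
  refine ⟨convex_Ioi 0, fun u hu v hv a b ha hb hab => ?_⟩
  have hu0 : (0:ℝ) < u := hu
  have hv0 : (0:ℝ) < v := hv
  have hmem : (0:ℝ) < a * u + b * v := by
    have := (convex_Ioi (0:ℝ)) hu hv ha hb hab
    simpa using this
  simp only [smul_eq_mul]
  have hpt : ∀ t ∈ Ioi (0:ℝ), f (a * u + b * v) t ≤ a * f u t + b * f v t := by
    intro t ht
    have ht0 : (0:ℝ) < t := ht
    have h1p : 0 < 1 - Real.exp (-t) := one_sub_exp_pos ht0
    have hE : Real.exp (-(a * u + b * v) * t) ≤ a * Real.exp (-u * t) + b * Real.exp (-v * t) := by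
      have hc := convexOn_exp.2 (mem_univ (-u * t)) (mem_univ (-v * t)) ha hb hab
      simp only [smul_eq_mul] at hc
      calc Real.exp (-(a * u + b * v) * t) = Real.exp (a * (-u * t) + b * (-v * t)) := by
            congr 1; ring
        _ ≤ _ := hc
    have key : a * f u t + b * f v t - f (a * u + b * v) t
        = (a * Real.exp (-u * t) + b * Real.exp (-v * t) - Real.exp (-(a * u + b * v) * t))
            / ((1 - Real.exp (-t)) * t) := by
      unfold f
      rw [show b = 1 - a by linarith]
      field_simp
      ring
    have h2 : 0 ≤ a * f u t + b * f v t - f (a * u + b * v) t := by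
      rw [key]
      exact div_nonneg (by linarith) (by positivity)
    linarith
  calc (∫ t in Ioi 0, f (a * u + b * v) t)
      ≤ ∫ t in Ioi 0, (a * f u t + b * f v t) := by
        apply integral_mono_ae (integrableOn hmem)
          (((integrableOn hu0).const_mul a).add ((integrableOn hv0).const_mul b))
        filter_upwards [ae_restrict_mem measurableSet_Ioi] with t ht using hpt t ht
    _ = a * (∫ t in Ioi 0, f u t) + b * (∫ t in Ioi 0, f v t) := by
        rw [integral_add ((integrableOn hu0).const_mul a) ((integrableOn hv0).const_mul b),
          integral_const_mul, integral_const_mul]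

end MalmstenAux

open MalmstenAux in
theorem malmsten_formula (x : ℝ) (hx : 0 < x) :
    Real.log (Real.Gamma x) =
      ∫ t in Set.Ioi (0 : ℝ),
        ((x - 1) * Real.exp (-t) +
          (Real.exp (-x * t) - Real.exp (-t)) / (1 - Real.exp (-t))) / t := by
  have key : Set.EqOn (fun x => Real.exp (∫ t in Ioi 0, f x t)) Real.Gamma (Ioi 0) := by
    apply Real.eq_Gamma_of_log_convex
    · have : (Real.log ∘ fun x => Real.exp (∫ t in Ioi 0, f x t))
          = fun x => ∫ t in Ioi 0, f x t := funext fun x => Real.log_exp _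
      rw [this]
      exact F_convex
    · intro y hy
      show Real.exp (∫ t in Ioi 0, f (y + 1) t) = y * Real.exp (∫ t in Ioi 0, f y t)
      rw [F_rec hy, Real.exp_add, Real.exp_log hy]
      ring
    · intro y hy
      exact Real.exp_pos _
    · show Real.exp (∫ t in Ioi (0:ℝ), f 1 t) = 1
      rw [F_one, Real.exp_zero]
  have h2 : Real.exp (∫ t in Ioi 0, f x t) = Real.Gamma x := key (mem_Ioi.2 hx)
  rw [← h2, Real.log_exp]
  rfl
end

section
/- For every real x > 0, log Γ(x) = (x - 1/2) log x - x + (1/2) log(2π) + ∫₀^∞ (1/2 - 1/t + 1/(e^t - 1)) (e^{-tx}/t) dt (the first Binet formula). -/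
open Real Set MeasureTheory Filter Topology

noncomputable def gb (t : ℝ) : ℝ := 1 / 2 - 1 / t + 1 / (Real.exp t - 1)

lemma one_sub_mul_exp_le (t : ℝ) : (1 - t) * Real.exp t ≤ 1 := by
  have h : 1 - t ≤ Real.exp (-t) := by
    have := Real.add_one_le_exp (-t); linarith
  calc (1 - t) * Real.exp t ≤ Real.exp (-t) * Real.exp t :=
        mul_le_mul_of_nonneg_right h (Real.exp_pos t).le
    _ = 1 := by rw [← Real.exp_add]; simp

lemma aux1 {t : ℝ} (ht : 0 ≤ t) : (2 - t) * Real.exp t ≤ 2 + t := by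
  set ψ : ℝ → ℝ := fun s => (2 - s) * Real.exp s - 2 - s with hψ
  have hd : ∀ s : ℝ, HasDerivAt ψ ((1 - s) * Real.exp s - 1) s := by
    intro s
    have h1 : HasDerivAt (fun s : ℝ => (2 - s) * Real.exp s)
        ((-1) * Real.exp s + (2 - s) * Real.exp s) s := by
      have := ((hasDerivAt_const s (2:ℝ)).sub (hasDerivAt_id s)).mul (Real.hasDerivAt_exp s)
      exact this.congr_deriv (by simp only [Pi.sub_apply, id]; ring)
    have := (h1.sub_const 2).sub (hasDerivAt_id s)
    exact this.congr_deriv (by ring)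
  have hanti : Antitone ψ := by
    apply antitone_of_deriv_nonpos
    · exact fun s => (hd s).differentiableAt
    · intro s
      rw [(hd s).deriv]
      have := one_sub_mul_exp_le s; linarith
  have := hanti ht
  simp only [hψ, Real.exp_zero] at this
  linarith

lemma aux0 {t : ℝ} (ht : 0 ≤ t) : Real.exp (-t) ≤ 1 - t + t ^ 2 / 2 := by
  set ρ : ℝ → ℝ := fun s => 1 - s + s ^ 2 / 2 - Real.exp (-s) with hρ
  have hd : ∀ s : ℝ, HasDerivAt ρ (-1 + s + Real.exp (-s)) s := by
    intro s
    have h1 : HasDerivAt (fun s : ℝ => Real.exp (-s)) (-Real.exp (-s)) s := by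
      exact ((Real.hasDerivAt_exp (-s)).comp s (hasDerivAt_neg s)).congr_deriv (by ring)
    have h2 : HasDerivAt (fun s : ℝ => 1 - s + s ^ 2 / 2) (-1 + s) s := by
      have := ((hasDerivAt_id s).const_sub (1:ℝ)).add
        ((hasDerivAt_pow 2 s).div_const 2)
      exact this.congr_deriv (by norm_num <;> ring)
    have := h2.sub h1
    exact this.congr_deriv (by ring)
  have hmono : MonotoneOn ρ (Ici (0:ℝ)) := by
    apply monotoneOn_of_deriv_nonneg (convex_Ici 0)
    · exact (Continuous.continuousOn (by continuity))
    · exact fun s _ => (hd s).differentiableAt.differentiableWithinAt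
    · intro s hs
      rw [interior_Ici] at hs
      rw [(hd s).deriv]
      have h : 1 - s ≤ Real.exp (-s) := by have := Real.add_one_le_exp (-s); linarith
      linarith
  have := hmono (self_mem_Ici) (mem_Ici.2 ht) ht
  simp only [hρ, neg_zero, Real.exp_zero] at this
  linarith

lemma aux2 {t : ℝ} (ht : 0 ≤ t) :
    (t - 2) * Real.exp t + t + 2 ≤ t ^ 3 * Real.exp t / 6 := by
  set ω : ℝ → ℝ := fun s => s ^ 3 * Real.exp s / 6 - ((s - 2) * Real.exp s + s + 2) with hω
  have hd : ∀ s : ℝ, HasDerivAt ω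
      ((s ^ 3 / 6 + s ^ 2 / 2 - s + 1) * Real.exp s - 1) s := by
    intro s
    have h1 : HasDerivAt (fun s : ℝ => s ^ 3 * Real.exp s / 6)
        ((3 * s ^ 2 * Real.exp s + s ^ 3 * Real.exp s) / 6) s := by
      exact ((hasDerivAt_pow 3 s).mul (Real.hasDerivAt_exp s)).div_const 6
    have h2 : HasDerivAt (fun s : ℝ => (s - 2) * Real.exp s + s + 2)
        (1 * Real.exp s + (s - 2) * Real.exp s + 1) s := by
      have := ((((hasDerivAt_id s).sub_const (2:ℝ)).mul (Real.hasDerivAt_exp s)).add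
        (hasDerivAt_id s)).add_const (2:ℝ)
      exact this
    have := h1.sub h2
    exact this.congr_deriv (by ring)
  have hmono : MonotoneOn ω (Ici (0:ℝ)) := by
    apply monotoneOn_of_deriv_nonneg (convex_Ici 0)
    · exact (Continuous.continuousOn (by continuity))
    · exact fun s _ => (hd s).differentiableAt.differentiableWithinAt
    · intro s hs
      rw [interior_Ici] at hs
      rw [(hd s).deriv]
      have hs' : 0 ≤ s := le_of_lt hs
      have h0 : Real.exp (-s) ≤ 1 - s + s ^ 2 / 2 + s ^ 3 / 6 := by
        have := aux0 hs'; nlinarith [pow_nonneg hs' 3]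
      have hkey : 1 ≤ (s ^ 3 / 6 + s ^ 2 / 2 - s + 1) * Real.exp s := by
        have hE := Real.exp_pos s
        have : Real.exp (-s) * Real.exp s = 1 := by rw [← Real.exp_add]; simp
        nlinarith [mul_le_mul_of_nonneg_right h0 hE.le]
      linarith
  have := hmono (self_mem_Ici) (mem_Ici.2 ht) ht
  simp only [hω, Real.exp_zero] at this
  linarith
lemma exp_sub_one_pos {t : ℝ} (ht : 0 < t) : 0 < Real.exp t - 1 := by
  have := Real.add_one_lt_exp (ne_of_gt ht); linarith

lemma gb_eq {t : ℝ} (ht : 0 < t) :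
    gb t = ((t - 2) * Real.exp t + t + 2) / (2 * t * (Real.exp t - 1)) := by
  have hE := exp_sub_one_pos ht
  rw [gb]
  field_simp
  ring

lemma gb_nonneg {t : ℝ} (ht : 0 < t) : 0 ≤ gb t := by
  rw [gb_eq ht]
  have hE := exp_sub_one_pos ht
  have h1 := aux1 ht.le
  apply div_nonneg (by linarith) (by positivity)

lemma gb_le_half {t : ℝ} (ht : 0 < t) : gb t ≤ 1 / 2 := by
  have hE := exp_sub_one_pos ht
  have h1 : t ≤ Real.exp t - 1 := by have := Real.add_one_le_exp t; linarith
  have h2 : 1 / (Real.exp t - 1) ≤ 1 / t := by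
    apply one_div_le_one_div_of_le ht h1
  rw [gb]; linarith

lemma gb_le {t : ℝ} (ht : 0 < t) : gb t ≤ t / 2 := by
  rcases le_or_gt t 1 with h1 | h1
  · rw [gb_eq ht]
    have hE := exp_sub_one_pos ht
    have h2 := aux2 ht.le
    have h3 : t ≤ Real.exp t - 1 := by have := Real.add_one_le_exp t; linarith
    rw [div_le_iff₀ (by positivity)]
    have hexp : Real.exp t ≤ 3 := by
      calc Real.exp t ≤ Real.exp 1 := Real.exp_le_exp.2 h1
        _ ≤ 3 := by have := Real.exp_one_lt_d9; linarith
    -- (t-2)e^t + t + 2 ≤ t^3 e^t/6 ≤ t^2 * 3 /6 * t ≤ (t/2) * (2t(e^t-1)) since e^t-1 ≥ t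
    have h4 : t ^ 3 * Real.exp t / 6 ≤ t / 2 * (2 * t * (Real.exp t - 1)) := by
      have : t ^ 3 * Real.exp t ≤ 3 * t ^ 3 := by nlinarith [pow_nonneg ht.le 3]
      nlinarith [pow_pos ht 3, sq_nonneg t]
    linarith
  · calc gb t ≤ 1 / 2 := gb_le_half ht
      _ ≤ t / 2 := by linarith
lemma integral_exp_neg_mul_Ioi {b : ℝ} (hb : 0 < b) :
    ∫ t in Ioi (0:ℝ), Real.exp (-(b * t)) = 1 / b := by
  have := MeasureTheory.integral_comp_mul_left_Ioi (fun u => Real.exp (-u)) 0 hb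
  simp only [mul_zero] at this
  rw [this, integral_exp_neg_Ioi_zero]
  simp [one_div]

lemma contOn_gb : ContinuousOn gb (Ioi (0:ℝ)) := by
  unfold gb
  apply ContinuousOn.add
  · apply ContinuousOn.sub continuousOn_const
    exact continuousOn_const.div continuousOn_id (fun t ht => ne_of_gt ht)
  · exact continuousOn_const.div
      ((Real.continuous_exp.continuousOn).sub continuousOn_const)
      (fun t ht => ne_of_gt (exp_sub_one_pos ht))

lemma contOn_G (x : ℝ) :
    ContinuousOn (fun t => gb t * (Real.exp (-t * x) / t)) (Ioi (0:ℝ)) := by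
  apply contOn_gb.mul
  apply ContinuousOn.div
  · exact (Real.continuous_exp.comp (by continuity)).continuousOn
  · exact continuousOn_id
  · exact fun t ht => ne_of_gt ht

lemma G_bound {x t : ℝ} (ht : t ∈ Ioi (0:ℝ)) :
    ‖gb t * (Real.exp (-t * x) / t)‖ ≤ 1 / 2 * Real.exp (-x * t) := by
  rw [mem_Ioi] at ht
  have h0 := gb_nonneg ht
  have h1 := gb_le ht
  have hE := Real.exp_pos (-t * x)
  rw [Real.norm_eq_abs, abs_of_nonneg (by positivity)]
  have : gb t * (Real.exp (-t * x) / t) ≤ (t / 2) * (Real.exp (-t * x) / t) := by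
    apply mul_le_mul_of_nonneg_right h1 (by positivity)
  calc gb t * (Real.exp (-t * x) / t) ≤ (t / 2) * (Real.exp (-t * x) / t) := this
    _ = 1 / 2 * Real.exp (-x * t) := by
        have : (-t * x) = (-x * t) := by ring
        rw [this]
        field_simp

lemma integrable_G {x : ℝ} (hx : 0 < x) :
    IntegrableOn (fun t => gb t * (Real.exp (-t * x) / t)) (Ioi (0:ℝ)) := by
  apply Integrable.mono' ((exp_neg_integrableOn_Ioi 0 hx).const_mul (1/2))
  · exact (contOn_G x).aestronglyMeasurable measurableSet_Ioi
  · exact (ae_restrict_iff' measurableSet_Ioi).2 (ae_of_all _ (fun t ht => G_bound ht))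

lemma mu_bound {x : ℝ} (hx : 0 < x) :
    |∫ t in Ioi (0:ℝ), gb t * (Real.exp (-t * x) / t)| ≤ 1 / (2 * x) := by
  have h1 : |∫ t in Ioi (0:ℝ), gb t * (Real.exp (-t * x) / t)| ≤
      ∫ t in Ioi (0:ℝ), 1 / 2 * Real.exp (-x * t) := by
    rw [← Real.norm_eq_abs]
    exact norm_integral_le_of_norm_le ((exp_neg_integrableOn_Ioi 0 hx).const_mul (1/2))
      ((ae_restrict_iff' measurableSet_Ioi).2 (ae_of_all _ (fun t ht => G_bound ht)))
  have h2 : ∫ t in Ioi (0:ℝ), 1 / 2 * Real.exp (-x * t) = 1/2 * (1/x) := by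
    rw [MeasureTheory.integral_const_mul]
    simp_rw [neg_mul]
    rw [integral_exp_neg_mul_Ioi hx]
  rw [h2] at h1
  calc |∫ t in Ioi (0:ℝ), gb t * (Real.exp (-t * x) / t)| ≤ 1/2 * (1/x) := h1
    _ = 1 / (2 * x) := by ring
lemma inner_eq {x t : ℝ} (ht : 0 < t) :
    ∫ v in (0:ℝ)..1, (1 / 2 - v) * Real.exp (-((x + v) * t)) =
      gb t * ((Real.exp (-t * x) - Real.exp (-t * (x + 1))) / t) := by
  have ht' : t ≠ 0 := ne_of_gt ht
  have hF : ∀ v ∈ uIcc (0:ℝ) 1,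
      HasDerivAt (fun v => Real.exp (-((x + v) * t)) * (1 / t ^ 2 - 1 / (2 * t) + v / t))
        ((1 / 2 - v) * Real.exp (-((x + v) * t))) v := by
    intro v _
    have h1 : HasDerivAt (fun v : ℝ => -((x + v) * t)) (-t) v := by
      have := (((hasDerivAt_id v).const_add x).mul_const t).neg
      exact this.congr_deriv (by ring)
    have h2 : HasDerivAt (fun v : ℝ => Real.exp (-((x + v) * t)))
        (Real.exp (-((x + v) * t)) * (-t)) v :=
      (Real.hasDerivAt_exp _).comp v h1
    have h3 : HasDerivAt (fun v : ℝ => 1 / t ^ 2 - 1 / (2 * t) + v / t) (1 / t) v := by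
      have := ((hasDerivAt_id v).div_const t).const_add (1 / t ^ 2 - 1 / (2 * t))
      exact this
    have := h2.mul h3
    exact this.congr_deriv (by field_simp; ring)
  have hInt : IntervalIntegrable (fun v => (1 / 2 - v) * Real.exp (-((x + v) * t)))
      volume 0 1 := (Continuous.intervalIntegrable (by continuity) 0 1)
  rw [intervalIntegral.integral_eq_sub_of_hasDerivAt hF hInt]
  have hE := exp_sub_one_pos ht
  have e1 : Real.exp (-((x + 1) * t)) = Real.exp (-t * x) * (Real.exp t)⁻¹ := by
    rw [← Real.exp_neg, ← Real.exp_add]; ring_nf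
  have e0 : Real.exp (-((x + 0) * t)) = Real.exp (-t * x) := by ring_nf
  have e2 : Real.exp (-t * (x + 1)) = Real.exp (-t * x) * (Real.exp t)⁻¹ := by
    rw [← Real.exp_neg, ← Real.exp_add]; ring_nf
  rw [e1, e0, e2, gb]
  have hEx := Real.exp_pos t
  field_simp
  ring

lemma inner_t_integral {x : ℝ} (hx : 0 < x) (v : ℝ) (hv : 0 ≤ v) :
    ∫ t in Ioi (0:ℝ), (1 / 2 - v) * Real.exp (-((x + v) * t)) =
      (1 / 2 - v) / (x + v) := by
  rw [MeasureTheory.integral_const_mul, integral_exp_neg_mul_Ioi (by linarith)]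
  ring

lemma v_integral {x : ℝ} (hx : 0 < x) :
    ∫ v in (0:ℝ)..1, (1 / 2 - v) / (x + v) =
      (x + 1 / 2) * (Real.log (x + 1) - Real.log x) - 1 := by
  have hF : ∀ v ∈ uIcc (0:ℝ) 1,
      HasDerivAt (fun v => (x + 1 / 2) * Real.log (x + v) - v)
        ((1 / 2 - v) / (x + v)) v := by
    intro v hv
    rw [uIcc_of_le (by norm_num), mem_Icc] at hv
    have hxv : 0 < x + v := by linarith [hv.1]
    have h1 : HasDerivAt (fun v : ℝ => x + v) 1 v := (hasDerivAt_id v).const_add x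
    have h2 : HasDerivAt (fun v : ℝ => Real.log (x + v)) (1 / (x + v)) v := by
      have := (Real.hasDerivAt_log (ne_of_gt hxv)).comp v h1
      exact this.congr_deriv (by simp)
    have := (h2.const_mul (x + 1 / 2)).sub (hasDerivAt_id v)
    exact this.congr_deriv (by field_simp; ring)
  have hInt : IntervalIntegrable (fun v => (1 / 2 - v) / (x + v)) volume 0 1 := by
    apply ContinuousOn.intervalIntegrable
    apply ContinuousOn.div
    · exact (continuousOn_const.sub continuousOn_id)
    · exact continuousOn_const.add continuousOn_id
    · intro v hv
      rw [uIcc_of_le (by norm_num), mem_Icc] at hv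
      have : 0 < x + v := by linarith [hv.1]
      exact ne_of_gt this
  rw [intervalIntegral.integral_eq_sub_of_hasDerivAt hF hInt]
  simp
  ring
lemma mu_diff {x : ℝ} (hx : 0 < x) :
    (∫ t in Ioi (0:ℝ), gb t * (Real.exp (-t * x) / t)) -
      (∫ t in Ioi (0:ℝ), gb t * (Real.exp (-t * (x + 1)) / t)) =
      (x + 1 / 2) * (Real.log (x + 1) - Real.log x) - 1 := by
  have hx1 : (0:ℝ) < x + 1 := by linarith
  have step1 : (∫ t in Ioi (0:ℝ), gb t * (Real.exp (-t * x) / t)) -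
      (∫ t in Ioi (0:ℝ), gb t * (Real.exp (-t * (x + 1)) / t)) =
      ∫ t in Ioi (0:ℝ), gb t * ((Real.exp (-t * x) - Real.exp (-t * (x + 1))) / t) := by
    rw [← MeasureTheory.integral_sub (integrable_G hx) (integrable_G hx1)]
    apply MeasureTheory.integral_congr_ae (ae_of_all _ (fun t => ?_))
    simp only [div_eq_mul_inv]
    ring
  have step2 : ∫ t in Ioi (0:ℝ), gb t * ((Real.exp (-t * x) - Real.exp (-t * (x + 1))) / t) =
      ∫ t in Ioi (0:ℝ), ∫ v in (0:ℝ)..1, (1 / 2 - v) * Real.exp (-((x + v) * t)) := by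
    apply MeasureTheory.setIntegral_congr_fun measurableSet_Ioi
    intro t ht
    exact (inner_eq ht).symm
  -- Fubini
  haveI : IsFiniteMeasure (volume.restrict (Ioc (0:ℝ) 1)) := by
    constructor
    rw [Measure.restrict_apply_univ]
    exact measure_Ioc_lt_top
  have hmeas : AEStronglyMeasurable
      (Function.uncurry fun t v => (1 / 2 - v) * Real.exp (-((x + v) * t)))
      ((volume.restrict (Ioi (0:ℝ))).prod (volume.restrict (Ioc (0:ℝ) 1))) := by
    apply Continuous.aestronglyMeasurable
    apply Continuous.mul
    · exact continuous_const.sub (continuous_snd)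
    · exact Real.continuous_exp.comp (by continuity)
  have hbd : Integrable
      (fun z : ℝ × ℝ => (1 / 2 * Real.exp (-x * z.1)) * (1 : ℝ))
      ((volume.restrict (Ioi (0:ℝ))).prod (volume.restrict (Ioc (0:ℝ) 1))) := by
    exact Integrable.mul_prod ((exp_neg_integrableOn_Ioi 0 hx).const_mul (1/2))
      (integrable_const 1)
  have hint : Integrable (Function.uncurry fun t v => (1 / 2 - v) * Real.exp (-((x + v) * t)))
      ((volume.restrict (Ioi (0:ℝ))).prod (volume.restrict (Ioc (0:ℝ) 1))) := by
    apply Integrable.mono' hbd hmeas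
    rw [Measure.prod_restrict]
    apply (ae_restrict_iff' (measurableSet_Ioi.prod measurableSet_Ioc)).2
    apply ae_of_all
    rintro ⟨t, v⟩ ⟨ht, hv⟩
    simp only [Function.uncurry, Real.norm_eq_abs, mul_one]
    rw [mem_Ioi] at ht
    rw [mem_Ioc] at hv
    have h1 : |1 / 2 - v| ≤ 1 / 2 := by rw [abs_le]; constructor <;> linarith [hv.1, hv.2]
    have h2 : Real.exp (-((x + v) * t)) ≤ Real.exp (-x * t) := by
      apply Real.exp_le_exp.2
      nlinarith [hv.1, ht]
    rw [abs_mul, abs_of_pos (Real.exp_pos _)]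
    calc |1 / 2 - v| * Real.exp (-((x + v) * t)) ≤ 1 / 2 * Real.exp (-x * t) := by
          apply mul_le_mul h1 h2 (Real.exp_pos _).le (by norm_num)
      _ = _ := rfl
  have step3 : ∫ t in Ioi (0:ℝ), ∫ v in (0:ℝ)..1, (1 / 2 - v) * Real.exp (-((x + v) * t)) =
      ∫ v in (0:ℝ)..1, ∫ t in Ioi (0:ℝ), (1 / 2 - v) * Real.exp (-((x + v) * t)) := by
    simp_rw [intervalIntegral.integral_of_le (zero_le_one)]
    exact MeasureTheory.integral_integral_swap hint
  have step4 : ∫ v in (0:ℝ)..1, ∫ t in Ioi (0:ℝ), (1 / 2 - v) * Real.exp (-((x + v) * t)) =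
      ∫ v in (0:ℝ)..1, (1 / 2 - v) / (x + v) := by
    apply intervalIntegral.integral_congr
    intro v hv
    rw [uIcc_of_le (by norm_num), mem_Icc] at hv
    exact inner_t_integral hx v hv.1
  rw [step1, step2, step3, step4, v_integral hx]
lemma tendsto_nat_log_one_add (a : ℝ) :
    Tendsto (fun n : ℕ => (n:ℝ) * Real.log (1 + a / n)) atTop (𝓝 a) := by
  have h := ((Real.continuousAt_log (Real.exp_pos a).ne').tendsto).comp
    (Real.tendsto_one_add_div_pow_exp a)
  simp only [Function.comp_def] at h
  rw [Real.log_exp] at h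
  apply h.congr
  intro n
  simp only [Function.comp_apply, Real.log_pow]

lemma tendsto_log_one_add_of_tendsto {u : ℕ → ℝ} (hu : Tendsto u atTop (𝓝 0)) :
    Tendsto (fun n => Real.log (1 + u n)) atTop (𝓝 0) := by
  have h1 : Tendsto (fun n => 1 + u n) atTop (𝓝 1) := by
    simpa using (tendsto_const_nhds (α := ℕ) (x := (1:ℝ))).add hu
  have h := ((Real.continuousAt_log one_ne_zero).tendsto).comp h1
  simpa [Real.log_one, Function.comp_def] using h

lemma tendsto_div_nat (a : ℝ) : Tendsto (fun n : ℕ => a / (n:ℝ)) atTop (𝓝 0) := by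
  simpa using (tendsto_const_nhds (x := a)).div_atTop tendsto_natCast_atTop_atTop

lemma tendsto_div_nat_add_one (a : ℝ) :
    Tendsto (fun n : ℕ => a / ((n:ℝ) + 1)) atTop (𝓝 0) := by
  apply (tendsto_const_nhds (x := a)).div_atTop
  apply tendsto_atTop_add_const_right
  exact tendsto_natCast_atTop_atTop

lemma stirling_log :
    Tendsto (fun n : ℕ => Real.log (Nat.factorial n) - ((n:ℝ) + 1 / 2) * Real.log n + n) atTop
      (𝓝 (1 / 2 * Real.log (2 * Real.pi))) := by
  have h1 := Stirling.tendsto_stirlingSeq_sqrt_pi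
  have hπ : (0:ℝ) < Real.sqrt Real.pi := Real.sqrt_pos.2 Real.pi_pos
  have h2 := ((Real.continuousAt_log hπ.ne').tendsto).comp h1
  simp only [Function.comp_def] at h2
  have h3 : Tendsto (fun n : ℕ => Real.log (Stirling.stirlingSeq n) + 1 / 2 * Real.log 2)
      atTop (𝓝 (Real.log (Real.sqrt Real.pi) + 1 / 2 * Real.log 2)) :=
    h2.add tendsto_const_nhds
  have hval : Real.log (Real.sqrt Real.pi) + 1 / 2 * Real.log 2 =
      1 / 2 * Real.log (2 * Real.pi) := by
    rw [Real.log_sqrt Real.pi_pos.le, Real.log_mul two_ne_zero Real.pi_pos.ne']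
    ring
  rw [hval] at h3
  apply h3.congr'
  filter_upwards [eventually_ge_atTop 1] with n hn
  have hn0 : (0:ℝ) < (n:ℝ) := by exact_mod_cast hn
  have hfac : (0:ℝ) < (Nat.factorial n : ℝ) := by exact_mod_cast Nat.factorial_pos n
  have hsq : (0:ℝ) < Real.sqrt (2 * n) := Real.sqrt_pos.2 (by positivity)
  have hpow : (0:ℝ) < ((n:ℝ) / Real.exp 1) ^ n := by positivity
  rw [Stirling.stirlingSeq]
  rw [Real.log_div hfac.ne' (by positivity), Real.log_mul hsq.ne' hpow.ne',
    Real.log_sqrt (by positivity), Real.log_pow,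
    Real.log_div hn0.ne' (Real.exp_pos 1).ne', Real.log_exp,
    Real.log_mul two_ne_zero hn0.ne']
  ring
lemma gamma_interp {s : ℝ} (hs1 : 0 < s) (hs2 : s ≤ 1) :
    Tendsto (fun n : ℕ => Real.log (Real.Gamma (s + n + 1)) -
      Real.log (Nat.factorial n) - s * Real.log ((n:ℝ) + 1)) atTop (𝓝 0) := by
  have key : ∀ n : ℕ,
      (1 - s) * (Real.log ((n:ℝ) + 1) - Real.log (s + n + 1)) ≤
        Real.log (Real.Gamma (s + n + 1)) - Real.log (Nat.factorial n) -
          s * Real.log ((n:ℝ) + 1) ∧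
      Real.log (Real.Gamma (s + n + 1)) - Real.log (Nat.factorial n) -
          s * Real.log ((n:ℝ) + 1) ≤ 0 := by
    intro n
    have hn1 : (0:ℝ) < (n:ℝ) + 1 := by positivity
    have hn2 : (0:ℝ) < (n:ℝ) + 2 := by positivity
    have hsn : (0:ℝ) < s + n + 1 := by positivity
    have hΓ1 : Real.Gamma ((n:ℝ) + 1) = Nat.factorial n := Real.Gamma_nat_eq_factorial n
    have hΓ2 : Real.Gamma ((n:ℝ) + 2) = ((n:ℝ) + 1) * Nat.factorial n := by
      have := Real.Gamma_nat_eq_factorial (n + 1)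
      push_cast at this
      rw [show ((n:ℝ) + 2) = (n:ℝ) + 1 + 1 by ring, this, Nat.factorial_succ]
      push_cast
      ring
    have hfac : (0:ℝ) < (Nat.factorial n : ℝ) := by exact_mod_cast Nat.factorial_pos n
    have hlog2 : Real.log (Real.Gamma ((n:ℝ) + 2)) =
        Real.log ((n:ℝ) + 1) + Real.log (Nat.factorial n) := by
      rw [hΓ2, Real.log_mul hn1.ne' hfac.ne']
    have hΓpos : 0 < Real.Gamma (s + n + 1) := Real.Gamma_pos_of_pos hsn
    constructor
    · -- lower bound
      have hcvx := Real.convexOn_log_Gamma.2 (mem_Ioi.2 hsn)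
        (mem_Ioi.2 (by positivity : (0:ℝ) < s + n + 2))
        hs1.le (by linarith : (0:ℝ) ≤ 1 - s) (by ring)
      have harg : s • (s + (n:ℝ) + 1) + (1 - s) • (s + (n:ℝ) + 2) = (n:ℝ) + 2 := by
        simp only [smul_eq_mul]; ring
      rw [harg] at hcvx
      simp only [Function.comp_apply, smul_eq_mul] at hcvx
      have hΓadd : Real.Gamma (s + n + 2) = (s + n + 1) * Real.Gamma (s + n + 1) := by
        have := Real.Gamma_add_one hsn.ne'
        rw [show s + (n:ℝ) + 2 = s + n + 1 + 1 by ring, this]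
      have hlogadd : Real.log (Real.Gamma (s + (n:ℝ) + 2)) =
          Real.log (s + n + 1) + Real.log (Real.Gamma (s + n + 1)) := by
        rw [hΓadd, Real.log_mul hsn.ne' hΓpos.ne']
      rw [hlog2, hlogadd] at hcvx
      nlinarith [hcvx]
    · -- upper bound
      have hcvx := Real.convexOn_log_Gamma.2 (mem_Ioi.2 hn1)
        (mem_Ioi.2 hn2) (by linarith : (0:ℝ) ≤ 1 - s) hs1.le (by ring)
      have harg : (1 - s) • ((n:ℝ) + 1) + s • ((n:ℝ) + 2) = s + (n:ℝ) + 1 := by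
        simp only [smul_eq_mul]; ring
      rw [harg] at hcvx
      simp only [Function.comp_apply, smul_eq_mul] at hcvx
      rw [hΓ1, hlog2] at hcvx
      nlinarith [hcvx]
  have hL : Tendsto (fun n : ℕ => (1 - s) * (Real.log ((n:ℝ) + 1) -
      Real.log (s + n + 1))) atTop (𝓝 0) := by
    have h1 := (tendsto_log_one_add_of_tendsto (tendsto_div_nat_add_one s)).neg.const_mul (1 - s)
    simp only [neg_zero, mul_zero] at h1
    apply h1.congr
    intro n
    have hn1 : (0:ℝ) < (n:ℝ) + 1 := by positivity
    have hsn : (0:ℝ) < s + n + 1 := by positivity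
    have : (1:ℝ) + s / ((n:ℝ) + 1) = (s + n + 1) / ((n:ℝ) + 1) := by field_simp; ring
    rw [this, Real.log_div hsn.ne' hn1.ne']
    ring
  exact tendsto_of_tendsto_of_tendsto_of_le_of_le hL tendsto_const_nhds
    (fun n => (key n).1) (fun n => (key n).2)

lemma C_tendsto {s : ℝ} (hs1 : 0 < s) :
    Tendsto (fun n : ℕ => ((n:ℝ) + 1 / 2) * (Real.log n - Real.log (s + n + 1)) +
      s * (Real.log ((n:ℝ) + 1) - Real.log (s + n + 1)) + (s + 1)) atTop (𝓝 0) := by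
  have hA := tendsto_nat_log_one_add (s + 1)
  have hB := tendsto_log_one_add_of_tendsto (tendsto_div_nat (s + 1))
  have hC := tendsto_log_one_add_of_tendsto (tendsto_div_nat_add_one s)
  have comb := ((hA.neg.sub (hB.const_mul (1/2))).sub (hC.const_mul s)).add
    (tendsto_const_nhds (x := s + 1))
  have : -(s+1) - 1/2 * 0 - s * 0 + (s+1) = 0 := by ring
  rw [this] at comb
  apply comb.congr'
  filter_upwards [eventually_ge_atTop 1] with n hn
  have hn0 : (0:ℝ) < (n:ℝ) := by exact_mod_cast hn
  have hn1 : (0:ℝ) < (n:ℝ) + 1 := by positivity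
  have hsn : (0:ℝ) < s + n + 1 := by positivity
  have e1 : (1:ℝ) + (s+1) / (n:ℝ) = (s + n + 1) / (n:ℝ) := by field_simp; ring
  have e2 : (1:ℝ) + s / ((n:ℝ) + 1) = (s + n + 1) / ((n:ℝ) + 1) := by field_simp; ring
  rw [e1, e2, Real.log_div hsn.ne' hn0.ne', Real.log_div hsn.ne' hn1.ne']
  ring
noncomputable def fB (y : ℝ) : ℝ :=
  Real.log (Real.Gamma y) - (y - 1 / 2) * Real.log y + y - 1 / 2 * Real.log (2 * Real.pi)

noncomputable def muB (y : ℝ) : ℝ :=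
  ∫ t in Ioi (0:ℝ), gb t * (Real.exp (-t * y) / t)

lemma f_tendsto {s : ℝ} (hs1 : 0 < s) (hs2 : s ≤ 1) :
    Tendsto (fun n : ℕ => fB (s + n + 1)) atTop (𝓝 0) := by
  have hδ : Tendsto (fun n : ℕ => (Real.log (Nat.factorial n) -
      ((n:ℝ) + 1 / 2) * Real.log n + n) - 1 / 2 * Real.log (2 * Real.pi)) atTop (𝓝 0) := by
    have := stirling_log.sub (tendsto_const_nhds (x := 1 / 2 * Real.log (2 * Real.pi)))
    rwa [sub_self] at this
  have comb := (gamma_interp hs1 hs2).add (hδ.add (C_tendsto hs1))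
  rw [add_zero, add_zero] at comb
  apply comb.congr
  intro n
  rw [fB]
  ring

lemma fmu_step {y : ℝ} (hy : 0 < y) : fB (y + 1) - muB (y + 1) = fB y - muB y := by
  have hμ := mu_diff hy
  have hΓ : Real.log (Real.Gamma (y + 1)) = Real.log y + Real.log (Real.Gamma y) := by
    rw [Real.Gamma_add_one hy.ne', Real.log_mul hy.ne' (Real.Gamma_pos_of_pos hy).ne']
  simp only [fB, muB] at *
  rw [hΓ]
  linear_combination hμ

lemma fmu_const {x : ℝ} (hx : 0 < x) :
    ∀ n : ℕ, fB (x + n) - muB (x + n) = fB x - muB x := by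
  intro n
  induction n with
  | zero => norm_num
  | succ n ih =>
      have h1 : x + ((n:ℕ) + 1 : ℕ) = (x + n) + 1 := by push_cast; ring
      rw [h1, fmu_step (by positivity), ih]

theorem binet_first (x : ℝ) (hx : 0 < x) :
    Real.log (Real.Gamma x) =
      (x - 1 / 2) * Real.log x - x + 1 / 2 * Real.log (2 * Real.pi) +
        ∫ t in Set.Ioi (0 : ℝ),
          (1 / 2 - 1 / t + 1 / (Real.exp t - 1)) * (Real.exp (-t * x) / t) := by
  -- set up fractional part decomposition
  have hceil : 1 ≤ ⌈x⌉₊ := by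
    rw [Nat.one_le_iff_ne_zero, ← Nat.pos_iff_ne_zero, Nat.ceil_pos]
    exact hx
  set k : ℕ := ⌈x⌉₊ - 1 with hk
  have hkcast : (k:ℝ) = (⌈x⌉₊:ℝ) - 1 := by
    rw [hk, Nat.cast_sub hceil, Nat.cast_one]
  set s : ℝ := x - k with hs
  have hs1 : 0 < s := by
    have := Nat.ceil_lt_add_one hx.le
    rw [hs, hkcast]; linarith
  have hs2 : s ≤ 1 := by
    have := Nat.le_ceil x
    rw [hs, hkcast]; linarith
  have hsk : s + k = x := by rw [hs]; ring
  -- fB (x + n + 1) → 0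
  have hF : Tendsto (fun n : ℕ => fB (x + ((n:ℝ) + 1))) atTop (𝓝 0) := by
    have h1 := (f_tendsto hs1 hs2).comp (tendsto_add_atTop_nat k)
    apply h1.congr
    intro n
    simp only [Function.comp_apply]
    congr 1
    push_cast
    linarith [hsk]
  -- muB (x + n + 1) → 0
  have hmu : Tendsto (fun n : ℕ => muB (x + ((n:ℝ) + 1))) atTop (𝓝 0) := by
    have hbd : Tendsto (fun n : ℕ => 1 / (2 * (x + ((n:ℝ) + 1)))) atTop (𝓝 0) := by
      apply Tendsto.div_atTop (tendsto_const_nhds (x := (1:ℝ)))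
      apply Tendsto.const_mul_atTop two_pos
      apply tendsto_atTop_add_const_left
      apply tendsto_atTop_add_const_right
      exact tendsto_natCast_atTop_atTop
    have hbd' : Tendsto (fun n : ℕ => -(1 / (2 * (x + ((n:ℝ) + 1))))) atTop (𝓝 0) := by
      simpa using hbd.neg
    apply tendsto_of_tendsto_of_tendsto_of_le_of_le hbd' hbd
    · intro n
      have h := mu_bound (x := x + ((n:ℝ) + 1)) (by positivity)
      rw [abs_le] at h
      exact h.1
    · intro n
      have h := mu_bound (x := x + ((n:ℝ) + 1)) (by positivity)
      rw [abs_le] at h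
      exact h.2
  have hzero : Tendsto (fun n : ℕ => fB x - muB x) atTop (𝓝 0) := by
    have hFmu := hF.sub hmu
    rw [sub_zero] at hFmu
    apply hFmu.congr
    intro n
    have := fmu_const hx (n + 1)
    push_cast at this
    rw [show x + ((n:ℝ) + 1) = x + (n + 1 : ℝ) by ring]
    exact this
  have hval : fB x - muB x = 0 := tendsto_nhds_unique tendsto_const_nhds hzero
  have : muB x = ∫ t in Set.Ioi (0 : ℝ),
      (1 / 2 - 1 / t + 1 / (Real.exp t - 1)) * (Real.exp (-t * x) / t) := by
    rw [muB]; rfl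
  rw [← this]
  simp only [fB] at hval
  linarith
end

section
/- For every real a > 0, ∫_a^{a+1} log Γ(x) dx = (1/2) log(2π) + a log a - a (Raabe's formula). -/
open Real MeasureTheory intervalIntegral Set

noncomputable def lg : ℝ → ℝ := fun x => Real.log (Real.Gamma x)

lemma lg_contAt {x : ℝ} (hx : 0 < x) : ContinuousAt lg x := by
  have h1 : DifferentiableAt ℝ Real.Gamma x := by
    apply Real.differentiableAt_Gamma
    intro m h
    have : (0:ℝ) ≤ m := m.cast_nonneg
    rw [h] at hx; linarith
  exact h1.continuousAt.log (Real.Gamma_pos_of_pos hx).ne'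

lemma lg_intOn {u v : ℝ} (hu : 0 < u) (hv : 0 < v) :
    IntervalIntegrable lg volume u v := by
  apply ContinuousOn.intervalIntegrable
  intro x hx
  have : 0 < x := lt_of_lt_of_le (lt_min hu hv) hx.1
  exact (lg_contAt this).continuousWithinAt

lemma lg_contOn : ContinuousOn lg (Ioi 0) :=
  fun x hx => (lg_contAt hx).continuousWithinAt

noncomputable def F : ℝ → ℝ := fun a => ∫ x in a..(a + 1), lg x

lemma F_hasDeriv {a : ℝ} (ha : 0 < a) : HasDerivAt F (Real.log a) a := by
  have key : ∀ b : ℝ, 0 < b →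
      HasDerivAt (fun t => ∫ x in (1:ℝ)..t, lg x) (lg b) b := by
    intro b hb
    exact integral_hasDerivAt_right (lg_intOn one_pos hb)
      (lg_contOn.stronglyMeasurableAtFilter isOpen_Ioi b hb) (lg_contAt hb)
  have h1 := key a ha
  have h2 := ((key (a + 1) (by linarith)).comp a ((hasDerivAt_id a).add_const 1))
  have h3 : HasDerivAt (fun t => (∫ x in (1:ℝ)..t+1, lg x) - ∫ x in (1:ℝ)..t, lg x)
      (lg (a+1) * 1 - lg a) a := h2.sub h1
  have heq : F =ᶠ[nhds a] fun t => (∫ x in (1:ℝ)..t+1, lg x) - ∫ x in (1:ℝ)..t, lg x := by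
    filter_upwards [eventually_gt_nhds ha] with t ht
    have := integral_add_adjacent_intervals (lg_intOn one_pos ht)
      (@lg_intOn t (t+1) ht (by linarith))
    simp only [F]
    linarith [this]
  have h4 := h3.congr_of_eventuallyEq heq
  have : lg (a+1) * 1 - lg a = Real.log a := by
    simp only [lg, mul_one, Real.Gamma_add_one ha.ne',
      Real.log_mul ha.ne' (Real.Gamma_pos_of_pos ha).ne']
    ring
  rwa [this] at h4

noncomputable def H : ℝ → ℝ := fun a => F a - (a * Real.log a - a)

lemma H_hasDeriv {x : ℝ} (hx : 0 < x) : HasDerivAt H 0 x := by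
  have h1 := (Real.hasDerivAt_mul_log hx.ne').sub (hasDerivAt_id x)
  have h2 := (F_hasDeriv hx).sub h1
  have : Real.log x - (Real.log x + 1 - 1) = 0 := by ring
  rw [this] at h2
  exact h2

lemma H_const {a b : ℝ} (ha : 0 < a) (hb : 0 < b) : H a = H b := by
  wlog hab : a ≤ b generalizing a b
  · exact (this hb ha (le_of_not_ge hab)).symm
  have key := constant_of_has_deriv_right_zero (f := H) (a := a) (b := b)
    (fun x hx => ((H_hasDeriv (lt_of_lt_of_le ha hx.1)).continuousAt).continuousWithinAt)
    (fun x hx => (H_hasDeriv (lt_of_lt_of_le ha hx.1)).hasDerivWithinAt)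
  exact (key b ⟨hab, le_refl b⟩).symm

lemma lg_dup {x : ℝ} (hx : 0 < x) :
    lg (2*x) = lg x + lg (x + 1/2) + ((2*x-1) * Real.log 2 - 1/2 * Real.log π) := by
  have h := Real.Gamma_mul_Gamma_add_half x
  have g1 : 0 < Real.Gamma x := Real.Gamma_pos_of_pos hx
  have g2 : 0 < Real.Gamma (x + 1/2) := Real.Gamma_pos_of_pos (by linarith)
  have g3 : 0 < Real.Gamma (2*x) := Real.Gamma_pos_of_pos (by linarith)
  have hlog := congrArg Real.log h
  rw [Real.log_mul g1.ne' g2.ne', Real.log_mul (by positivity) (Real.sqrt_pos.2 pi_pos).ne',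
    Real.log_mul g3.ne' (by positivity), Real.log_rpow two_pos,
    Real.log_sqrt pi_pos.le] at hlog
  simp only [lg]
  linarith [hlog]

lemma F_eq {t : ℝ} (ht : 0 < t) : F t = H 1 + (t * Real.log t - t) := by
  have := H_const ht one_pos
  simp only [H] at this ⊢
  rw [Real.log_one] at this ⊢
  linarith

lemma key_eq : (1/2) * (F 1 + F 2) = F (1/2) + F 1 + (Real.log 2 - 1/2 * Real.log π) := by
  have hmul := integral_comp_mul_left (f := lg) (a := (1/2:ℝ)) (b := 3/2) two_ne_zero
  have h2 : (2:ℝ) * (1/2) = 1 := by norm_num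
  have h3 : (2:ℝ) * (3/2) = 3 := by norm_num
  rw [h2, h3] at hmul
  have h13 : ∫ x in (1:ℝ)..3, lg x = F 1 + F 2 := by
    rw [← integral_add_adjacent_intervals (@lg_intOn 1 2 one_pos two_pos)
      (@lg_intOn 2 3 two_pos three_pos)]
    have e1 : F 1 = ∫ x in (1:ℝ)..2, lg x := by simp only [F]; norm_num
    have e2 : F 2 = ∫ x in (2:ℝ)..3, lg x := by simp only [F]; norm_num
    rw [e1, e2]
  have hcongr : ∫ x in (1/2:ℝ)..(3/2), lg (2*x) =
      ∫ x in (1/2:ℝ)..(3/2), (lg x + lg (x + 1/2) + ((2*x-1) * Real.log 2 - 1/2 * Real.log π)) := by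
    apply integral_congr
    intro x hx
    rw [Set.uIcc_of_le (by norm_num : (1/2:ℝ) ≤ 3/2)] at hx
    exact lg_dup (by linarith [hx.1])
  have i1 : IntervalIntegrable lg volume (1/2:ℝ) (3/2) := lg_intOn (by norm_num) (by norm_num)
  have i2 : IntervalIntegrable (fun x => lg (x + 1/2)) volume (1/2:ℝ) (3/2) := by
    have := (@lg_intOn 1 2 one_pos two_pos).comp_add_right (1/2)
    norm_num at this
    convert this using 2 <;> norm_num
  have i3 : IntervalIntegrable (fun x : ℝ => (2*x-1) * Real.log 2 - 1/2 * Real.log π)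
      volume (1/2:ℝ) (3/2) := (Continuous.intervalIntegrable (by continuity) _ _)
  have hsplit : ∫ x in (1/2:ℝ)..(3/2),
      (lg x + lg (x + 1/2) + ((2*x-1) * Real.log 2 - 1/2 * Real.log π)) =
      (∫ x in (1/2:ℝ)..(3/2), lg x) + (∫ x in (1/2:ℝ)..(3/2), lg (x + 1/2)) +
      (∫ x in (1/2:ℝ)..(3/2), ((2*x-1) * Real.log 2 - 1/2 * Real.log π)) := by
    rw [integral_add (i1.add i2) i3, integral_add i1 i2]
  have ea : ∫ x in (1/2:ℝ)..(3/2), lg x = F (1/2) := by simp only [F]; norm_num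
  have eb : ∫ x in (1/2:ℝ)..(3/2), lg (x + 1/2) = F 1 := by
    rw [integral_comp_add_right lg (1/2)]
    simp only [F]; norm_num
  have ec : ∫ x in (1/2:ℝ)..(3/2), ((2*x-1) * Real.log 2 - 1/2 * Real.log π)
      = Real.log 2 - 1/2 * Real.log π := by
    have hfun : (fun x : ℝ => (2*x-1) * Real.log 2 - 1/2 * Real.log π) =
        fun x : ℝ => (2 * Real.log 2) * x + (-Real.log 2 - 1/2 * Real.log π) := by
      funext x; ring
    rw [hfun, integral_add (Continuous.intervalIntegrable (by continuity) _ _)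
      intervalIntegrable_const, intervalIntegral.integral_const_mul, integral_id, intervalIntegral.integral_const]
    norm_num
    ring
  rw [hcongr, hsplit, ea, eb, ec, h13, smul_eq_mul] at hmul
  linarith

lemma H_one : H 1 = 1/2 * Real.log (2*π) := by
  have k := key_eq
  rw [F_eq one_pos, F_eq two_pos, F_eq (by norm_num : (0:ℝ) < 1/2)] at k
  rw [Real.log_one] at k
  have hhalf : Real.log (1/2) = -Real.log 2 := by
    rw [one_div, Real.log_inv]
  rw [hhalf] at k
  rw [Real.log_mul two_ne_zero pi_ne_zero]
  linarith

theorem raabe_formula (a : ℝ) (ha : 0 < a) :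
    ∫ x in a..(a + 1), Real.log (Real.Gamma x) =
      1 / 2 * Real.log (2 * Real.pi) + a * Real.log a - a := by
  have h := F_eq ha
  rw [H_one] at h
  simp only [F, lg] at h
  linarith
end

section
/- For every real x with 0 < x < 1, log Γ(x) = (log π)/2 - (1/2) log(sin(π x)) + (1/2) ∫₀^∞ [ sinh((1/2 - x) t)/sinh(t/2) - (1 - 2x) e^{-t} ] (dt/t) (Kummer's integral for log Γ). -/
set_option maxHeartbeats 1000000
open Real MeasureTheory Set Filter Topology Nat

lemma frullani_aux {a b : ℝ} (ha : 0 < a) (hab : a ≤ b) :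
    Integrable (Function.uncurry fun t s : ℝ => Real.exp (-(s*t)))
      ((volume.restrict (Ioi (0:ℝ))).prod (volume.restrict (Ioc a b))) := by
  have hFc : Continuous (Function.uncurry fun t s : ℝ => Real.exp (-(s*t))) := by
    have : Continuous fun p : ℝ × ℝ => Real.exp (-(p.2 * p.1)) := by continuity
    exact this
  rw [MeasureTheory.integrable_prod_iff' hFc.aestronglyMeasurable]
  refine ⟨?_, ?_⟩
  · filter_upwards [ae_restrict_mem measurableSet_Ioc] with s hs
    have := exp_neg_integrableOn_Ioi 0 (ha.trans hs.1)
    simp only [Function.uncurry]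
    have h2 : IntegrableOn (fun t : ℝ => Real.exp (-(s*t))) (Ioi 0) := by simpa [neg_mul] using this
    exact h2
  · apply MeasureTheory.Integrable.mono' (g := fun s => 1/s)
    · apply (ContinuousOn.integrableOn_compact isCompact_Icc ?_).mono_set Ioc_subset_Icc_self
      apply ContinuousOn.div continuousOn_const continuousOn_id
      intro s hs; exact (ha.trans_le hs.1).ne'
    · exact (hFc.norm.stronglyMeasurable.integral_prod_left').aestronglyMeasurable
    · filter_upwards [ae_restrict_mem measurableSet_Ioc] with s hs
      have hs0 : 0 < s := ha.trans hs.1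
      have heq : ∫ t in Ioi (0:ℝ), ‖Real.exp (-(s*t))‖ = 1/s := by
        simp_rw [Real.norm_eq_abs, abs_of_pos (Real.exp_pos _)]
        have := Real.integral_rpow_mul_exp_neg_mul_Ioi (one_pos) hs0
        simpa using this
      simp only [Function.uncurry]
      rw [Real.norm_eq_abs, abs_of_nonneg, heq]
      apply integral_nonneg; intro t; positivity

lemma frullani_key {a b : ℝ} (ha : 0 < a) (hab : a ≤ b) :
    ∀ t ∈ Ioi (0:ℝ), (Real.exp (-(a*t)) - Real.exp (-(b*t)))/t
      = ∫ s in Ioc a b, Real.exp (-(s*t)) := by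
  intro t ht
  have ht' : (0:ℝ) < t := ht
  have : ∫ s in a..b, Real.exp (-(s*t))
      = (-(Real.exp (-(b*t))/t)) - (-(Real.exp (-(a*t))/t)) := by
    apply intervalIntegral.integral_eq_sub_of_hasDerivAt
    · intro s _
      have h1 : HasDerivAt (fun s : ℝ => -(s*t)) (-(1*t)) s :=
        ((hasDerivAt_id s).mul_const t).neg
      have h2 := ((h1.exp).div_const t).neg
      convert h2 using 1
      · ext y; simp
      · rw [one_mul, mul_neg, neg_div, neg_neg, mul_div_assoc, div_self ht'.ne', mul_one]
    · apply Continuous.intervalIntegrable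
      continuity
  rw [← intervalIntegral.integral_of_le hab, this]
  field_simp
  ring

lemma frullani_integrable0 {a b : ℝ} (ha : 0 < a) (hab : a ≤ b) :
    IntegrableOn (fun t => (Real.exp (-(a*t)) - Real.exp (-(b*t)))/t) (Ioi (0:ℝ)) := by
  have h := (frullani_aux ha hab).integral_prod_left
  apply h.congr
  filter_upwards [ae_restrict_mem measurableSet_Ioi] with t ht
  exact (frullani_key ha hab t ht).symm

lemma frullani0 {a b : ℝ} (ha : 0 < a) (hab : a ≤ b) :
    ∫ t in Ioi (0:ℝ), (Real.exp (-(a*t)) - Real.exp (-(b*t)))/t = Real.log b - Real.log a := by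
  have hb : 0 < b := ha.trans_le hab
  rw [setIntegral_congr_fun measurableSet_Ioi (frullani_key ha hab)]
  have swap : ∫ t in Ioi (0:ℝ), ∫ s in Ioc a b, Real.exp (-(s*t))
      = ∫ s in Ioc a b, ∫ t in Ioi (0:ℝ), Real.exp (-(s*t)) :=
    MeasureTheory.integral_integral_swap (frullani_aux ha hab)
  rw [swap]
  have inner : ∀ s ∈ Ioc a b, ∫ t in Ioi (0:ℝ), Real.exp (-(s*t)) = 1/s := by
    intro s hs
    have hs0 : 0 < s := ha.trans hs.1
    have := Real.integral_rpow_mul_exp_neg_mul_Ioi (one_pos) hs0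
    simpa using this
  have h0 : (0:ℝ) ∉ uIcc a b := by
    rw [Set.uIcc_of_le hab]
    exact fun h => absurd h.1 (not_le.2 ha)
  rw [setIntegral_congr_fun measurableSet_Ioc inner, ← intervalIntegral.integral_of_le hab,
    integral_one_div h0, Real.log_div hb.ne' ha.ne']

lemma frullani_integrable {a b : ℝ} (ha : 0 < a) (hb : 0 < b) :
    IntegrableOn (fun t => (Real.exp (-(a*t)) - Real.exp (-(b*t)))/t) (Ioi (0:ℝ)) := by
  rcases le_total a b with h | h
  · exact frullani_integrable0 ha h
  · have h2 := (frullani_integrable0 hb h).neg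
    have heq : (fun t => (Real.exp (-(a*t)) - Real.exp (-(b*t)))/t)
        = fun t => -((Real.exp (-(b*t)) - Real.exp (-(a*t)))/t) := by funext t; ring
    rw [heq]; exact h2

lemma frullani {a b : ℝ} (ha : 0 < a) (hb : 0 < b) :
    ∫ t in Ioi (0:ℝ), (Real.exp (-(a*t)) - Real.exp (-(b*t)))/t = Real.log b - Real.log a := by
  rcases le_total a b with h | h
  · exact frullani0 ha h
  · calc ∫ t in Ioi (0:ℝ), (Real.exp (-(a*t)) - Real.exp (-(b*t)))/t
        = ∫ t in Ioi (0:ℝ), -((Real.exp (-(b*t)) - Real.exp (-(a*t)))/t) := by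
          apply setIntegral_congr_fun measurableSet_Ioi; intro t _; ring
      _ = -∫ t in Ioi (0:ℝ), (Real.exp (-(b*t)) - Real.exp (-(a*t)))/t := integral_neg _
      _ = -(Real.log a - Real.log b) := by rw [frullani0 hb h]
      _ = Real.log b - Real.log a := by ring

lemma sinh_identity (x t : ℝ) (ht : 0 < t) :
    Real.sinh ((1/2 - x) * t) / Real.sinh (t/2)
      = (Real.exp (-(x*t)) - Real.exp (-((1-x)*t))) / (1 - Real.exp (-t)) := by
  have h1 : Real.sinh (t/2) ≠ 0 := ne_of_gt (by positivity)
  have h2 : (1:ℝ) - Real.exp (-t) ≠ 0 := by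
    have : Real.exp (-t) < 1 := Real.exp_lt_one_iff.2 (by linarith)
    linarith
  have hA : Real.exp (t/2) * Real.exp (-(t/2)) = 1 := by rw [← Real.exp_add]; simp
  have e1 : Real.exp ((1/2 - x)*t) = Real.exp (t/2) * Real.exp (-(x*t)) := by
    rw [← Real.exp_add]; ring_nf
  have e2 : Real.exp (-((1/2 - x)*t)) = Real.exp (-(t/2)) * Real.exp (x*t) := by
    rw [← Real.exp_add]; ring_nf
  have e3 : Real.exp (-t) = Real.exp (-(t/2)) * Real.exp (-(t/2)) := by
    rw [← Real.exp_add]; ring_nf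
  have e4 : Real.exp (-((1-x)*t)) = Real.exp (-(t/2)) * Real.exp (-(t/2)) * Real.exp (x*t) := by
    rw [← Real.exp_add, ← Real.exp_add]; ring_nf
  rw [div_eq_div_iff h1 h2, Real.sinh_eq, Real.sinh_eq, e1, e2, e3, e4]
  linear_combination (-(Real.exp (-(t/2)) * (Real.exp (-(x*t)) + Real.exp (x*t)))/2 + Real.exp (-(t/2)) * Real.exp (x*t)) * hA

lemma exp_neg_quad {s : ℝ} (h0 : 0 ≤ s) (h1 : s ≤ 1) :
    |Real.exp (-s) - (1 - s)| ≤ 3/4 * s^2 := by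
  have h := Real.exp_bound (x := -s) (by rw [abs_neg, abs_of_nonneg h0]; exact h1) (n := 2) (by norm_num)
  simp only [Finset.sum_range_succ, Finset.sum_range_zero] at h
  norm_num at h
  have e : (1:ℝ) + -s = 1 - s := by ring
  rw [e] at h
  linarith

lemma one_sub_exp_neg_ge {t : ℝ} (ht : 0 < t) (ht1 : t ≤ 1) :
    t/2 ≤ 1 - Real.exp (-t) := by
  have h1 : 1 + t ≤ Real.exp t := by linarith [Real.add_one_le_exp t]
  have h3 : Real.exp (-t) ≤ 1 / (1 + t) := by
    rw [Real.exp_neg, inv_eq_one_div]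
    apply one_div_le_one_div_of_le (by linarith) h1
  have h4 : 1 / (1 + t) ≤ 1 - t/2 := by
    rw [div_le_iff₀ (by linarith)]
    nlinarith
  linarith

lemma S_bound {x t : ℝ} (hx0 : 0 < x) (hx1 : x < 1) (ht : 0 < t) (ht1 : t ≤ 1) :
    |(Real.exp (-(x*t)) - Real.exp (-((1-x)*t))) / (1 - Real.exp (-t)) + (2*x-1)| ≤ 3*t := by
  have hden : t/2 ≤ 1 - Real.exp (-t) := one_sub_exp_neg_ge ht ht1
  have hden0 : (0:ℝ) < 1 - Real.exp (-t) := by linarith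
  have h1 := abs_le.1 (exp_neg_quad (s := x*t) (by positivity) (by nlinarith))
  have h2 := abs_le.1 (exp_neg_quad (s := (1-x)*t)
    (mul_nonneg (by linarith) ht.le) (by nlinarith))
  have h3 := abs_le.1 (exp_neg_quad (s := t) ht.le ht1)
  have hM : |Real.exp (-(x*t)) - Real.exp (-((1-x)*t)) + (2*x-1) * (1 - Real.exp (-t))|
      ≤ 3/2 * t^2 := by
    rw [abs_le]
    have key : Real.exp (-(x*t)) - Real.exp (-((1-x)*t)) + (2*x-1) * (1 - Real.exp (-t))
        = (Real.exp (-(x*t)) - (1 - x*t)) - (Real.exp (-((1-x)*t)) - (1 - (1-x)*t))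
          - (2*x-1) * (Real.exp (-t) - (1 - t)) := by ring
    rw [key]
    rcases le_total x (1/2) with h | h
    · have hc : (0:ℝ) ≤ 1 - 2*x := by linarith
      have p1 := mul_le_mul_of_nonneg_left h3.2 hc
      have p2 := mul_le_mul_of_nonneg_left h3.1 hc
      constructor <;> nlinarith [sq_nonneg t, mul_nonneg (mul_nonneg (sq_nonneg t) hx0.le) (by linarith : (0:ℝ) ≤ 1 - x)]
    · have hc : (0:ℝ) ≤ 2*x - 1 := by linarith
      have p1 := mul_le_mul_of_nonneg_left h3.2 hc
      have p2 := mul_le_mul_of_nonneg_left h3.1 hc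
      have q1 : 0 ≤ t^2 * (1 - x^2) :=
        mul_nonneg (sq_nonneg t) (by nlinarith)
      constructor <;> nlinarith [sq_nonneg t, q1]
  have heq : (Real.exp (-(x*t)) - Real.exp (-((1-x)*t))) / (1 - Real.exp (-t)) + (2*x-1)
      = (Real.exp (-(x*t)) - Real.exp (-((1-x)*t)) + (2*x-1) * (1 - Real.exp (-t)))
        / (1 - Real.exp (-t)) := by field_simp
  rw [heq, abs_div, abs_of_pos hden0, div_le_iff₀ hden0]
  calc |Real.exp (-(x*t)) - Real.exp (-((1-x)*t)) + (2*x-1) * (1 - Real.exp (-t))|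
      ≤ 3/2 * t^2 := hM
    _ ≤ 3*t*(t/2) := by ring_nf; linarith
    _ ≤ 3*t*(1 - Real.exp (-t)) := by
        apply mul_le_mul_of_nonneg_left hden (by positivity)

lemma bound_main {x t : ℝ} (hx0 : 0 < x) (hx1 : x < 1) {n : ℕ} (hn : 1 ≤ n) (ht : 0 < t) :
    |((2*x-1)*(Real.exp (-t) - Real.exp (-t)^n)
      + (Real.exp (-(x*t)) - Real.exp (-((1-x)*t))) * (1 - Real.exp (-t)^(n+1))
        / (1 - Real.exp (-t)))/t|
    ≤ 6 * Real.exp (min x (1-x)) * Real.exp (-(min x (1-x) * t)) := by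
  set c := min x (1-x) with hc
  have hc0 : 0 < c := lt_min hx0 (by linarith)
  have hcx : c ≤ x := min_le_left _ _
  have hcx1 : c ≤ 1-x := min_le_right _ _
  have hc1 : c < 1 := lt_of_le_of_lt hcx hx1
  set r := Real.exp (-t) with hr
  have hr0 : 0 < r := Real.exp_pos _
  have hr1 : r < 1 := Real.exp_lt_one_iff.2 (by linarith)
  set E := Real.exp (-(c*t)) with hE
  have hE0 : 0 < E := Real.exp_pos _
  have hrE : r ≤ E := Real.exp_le_exp.2 (by nlinarith)
  have hxE : Real.exp (-(x*t)) ≤ E := Real.exp_le_exp.2 (by nlinarith)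
  have hx1E : Real.exp (-((1-x)*t)) ≤ E := Real.exp_le_exp.2 (by nlinarith)
  have hrn : r^n ≤ r := by
    calc r^n ≤ r^1 := pow_le_pow_of_le_one hr0.le hr1.le hn
      _ = r := pow_one r
  have hrn0 : 0 < r^n := pow_pos hr0 n
  have hrn1 : r^(n+1) ≤ r := by
    calc r^(n+1) ≤ r^1 := pow_le_pow_of_le_one hr0.le hr1.le (by omega)
      _ = r := pow_one r
  have hrn10 : 0 < r^(n+1) := pow_pos hr0 (n+1)
  have hden0 : 0 < 1 - r := by linarith
  have h2x : |2*x-1| ≤ 1 := by rw [abs_le]; constructor <;> linarith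
  have hexpc1 : (1:ℝ) ≤ Real.exp c := Real.one_le_exp hc0.le
  set Sn := Real.exp (-(x*t)) - Real.exp (-((1-x)*t)) with hSn
  rcases le_total t 1 with ht1 | ht1
  · -- small t
    have hT2 := S_bound hx0 hx1 ht ht1
    have hrget : 1 - t ≤ r := by
      have := Real.add_one_le_exp (-t); linarith
    have hrlet : 1 - r ≤ t := by
      nlinarith
    have hD : |(r - 1) - r^n*(1-r)| ≤ 2*t := by
      rw [abs_le]
      have h1 : r^n*(1-r) ≤ 1*(1-r) :=
        mul_le_mul_of_nonneg_right (by nlinarith : r^n ≤ 1) hden0.le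
      have h2 : 0 ≤ r^n*(1-r) := by positivity
      constructor <;> nlinarith
    have hdecomp : (2*x-1)*(r - r^n) + Sn * (1 - r^(n+1))/(1-r)
        = (2*x-1)*((r-1) - r^n*(1-r)) + (Sn/(1-r) + (2*x-1))*(1 - r^(n+1)) := by
      field_simp
      ring
    have habs1 : |(2*x-1)*((r-1) - r^n*(1-r))| ≤ 2*t := by
      rw [abs_mul]
      calc |2*x-1| * |(r-1) - r^n*(1-r)| ≤ 1 * (2*t) :=
            mul_le_mul h2x hD (abs_nonneg _) (by norm_num)
        _ = 2*t := one_mul _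
    have habs2 : |(Sn/(1-r) + (2*x-1))*(1 - r^(n+1))| ≤ 3*t := by
      rw [abs_mul]
      calc |Sn/(1-r) + (2*x-1)| * |1 - r^(n+1)| ≤ (3*t) * 1 := by
            apply mul_le_mul hT2 _ (abs_nonneg _) (by positivity)
            rw [abs_le]; constructor <;> nlinarith
        _ = 3*t := mul_one _
    have hnum : |(2*x-1)*(r - r^n) + Sn * (1 - r^(n+1))/(1-r)| ≤ 5*t := by
      rw [hdecomp]
      calc |(2*x-1)*((r-1) - r^n*(1-r)) + (Sn/(1-r) + (2*x-1))*(1 - r^(n+1))|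
          ≤ |(2*x-1)*((r-1) - r^n*(1-r))| + |(Sn/(1-r) + (2*x-1))*(1 - r^(n+1))| := abs_add_le _ _
        _ ≤ 2*t + 3*t := add_le_add habs1 habs2
        _ = 5*t := by ring
    rw [abs_div, abs_of_pos ht, div_le_iff₀ ht]
    have hRHS : (6:ℝ) ≤ 6 * Real.exp c * E := by
      have : (1:ℝ) ≤ Real.exp c * E := by
        rw [hE, ← Real.exp_add]
        apply Real.one_le_exp
        nlinarith
      nlinarith
    calc |(2*x-1)*(r - r^n) + Sn * (1 - r^(n+1))/(1-r)| ≤ 5*t := hnum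
      _ ≤ 6*t := by linarith
      _ ≤ (6 * Real.exp c * E) * t := by nlinarith
  · -- large t
    have hrhalf : r ≤ 1/2 := by
      have h2e : (2:ℝ) ≤ Real.exp 1 := by
        have := Real.add_one_le_exp 1; linarith
      have : r ≤ Real.exp (-1) := Real.exp_le_exp.2 (by linarith)
      rw [Real.exp_neg] at this
      have : r * Real.exp 1 ≤ 1 := by
        rw [← Real.exp_neg] at *
        calc r * Real.exp 1 ≤ Real.exp (-1) * Real.exp 1 :=
              mul_le_mul_of_nonneg_right this (Real.exp_pos 1).le
          _ = 1 := by rw [← Real.exp_add]; norm_num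
      nlinarith [Real.exp_pos 1]
    have hden2 : (1:ℝ)/2 ≤ 1 - r := by linarith
    have habs1 : |(2*x-1)*(r - r^n)| ≤ E := by
      rw [abs_mul]
      calc |2*x-1| * |r - r^n| ≤ 1 * E := by
            apply mul_le_mul h2x _ (abs_nonneg _) (by norm_num)
            rw [abs_le]; constructor <;> nlinarith
        _ = E := one_mul _
    have habs2 : |Sn * (1 - r^(n+1))/(1-r)| ≤ 4*E := by
      rw [abs_div, abs_of_pos hden0, div_le_iff₀ hden0, abs_mul]
      have hs : |Sn| ≤ 2*E := by
        rw [abs_le]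
        constructor <;> [nlinarith [Real.exp_pos (-(x*t)), Real.exp_pos (-((1-x)*t))];
          nlinarith [Real.exp_pos (-(x*t)), Real.exp_pos (-((1-x)*t))]]
      have h1 : |1 - r^(n+1)| ≤ 1 := by rw [abs_le]; constructor <;> nlinarith
      calc |Sn| * |1 - r^(n+1)| ≤ (2*E) * 1 :=
            mul_le_mul hs h1 (abs_nonneg _) (by positivity)
        _ = 2*E := mul_one _
        _ ≤ 4*E*(1-r) := by nlinarith
    rw [abs_div, abs_of_pos ht, div_le_iff₀ ht]
    calc |(2*x-1)*(r - r^n) + Sn * (1 - r^(n+1))/(1-r)|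
        ≤ |(2*x-1)*(r - r^n)| + |Sn * (1 - r^(n+1))/(1-r)| := abs_add_le _ _
      _ ≤ E + 4*E := add_le_add habs1 habs2
      _ = 5*E := by ring
      _ ≤ (6 * Real.exp c * E) * t := by
        have h1 : (1:ℝ) ≤ Real.exp c * t := by nlinarith
        nlinarith [mul_le_mul_of_nonneg_left h1 (by positivity : (0:ℝ) ≤ 6*E)]

lemma geom_id (x t : ℝ) (ht : 0 < t) (m : ℕ) :
    ∑ j ∈ Finset.range m, (Real.exp (-((x+j)*t)) - Real.exp (-(((1-x)+j)*t)))
      = (Real.exp (-(x*t)) - Real.exp (-((1-x)*t))) * (1 - Real.exp (-t)^m)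
        / (1 - Real.exp (-t)) := by
  have hr1 : Real.exp (-t) < 1 := Real.exp_lt_one_iff.2 (by linarith)
  have hterm : ∀ j ∈ Finset.range m,
      Real.exp (-((x+j)*t)) - Real.exp (-(((1-x)+j)*t))
        = (Real.exp (-(x*t)) - Real.exp (-((1-x)*t))) * Real.exp (-t)^j := by
    intro j _
    have e1 : Real.exp (-((x+j)*t)) = Real.exp (-(x*t)) * Real.exp (-t)^j := by
      rw [← Real.exp_nat_mul, ← Real.exp_add]; congr 1; ring
    have e2 : Real.exp (-(((1-x)+j)*t)) = Real.exp (-((1-x)*t)) * Real.exp (-t)^j := by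
      rw [← Real.exp_nat_mul, ← Real.exp_add]; congr 1; ring
    rw [e1, e2]; ring
  rw [Finset.sum_congr rfl hterm, ← Finset.mul_sum, geom_sum_eq hr1.ne m]
  rw [mul_div_assoc]
  congr 1
  rw [← neg_div_neg_eq]
  ring_nf

lemma A_eq (x : ℝ) (hx0 : 0 < x) (hx1 : x < 1) (n : ℕ) (hn : 1 ≤ n) :
    (2*x-1) * Real.log n + ∑ j ∈ Finset.range (n+1), (Real.log ((1-x)+j) - Real.log (x+j))
      = ∫ t in Ioi (0:ℝ), ((2*x-1)*(Real.exp (-(1*t)) - Real.exp (-((n:ℝ)*t)))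
          + ∑ j ∈ Finset.range (n+1),
            (Real.exp (-((x+j)*t)) - Real.exp (-(((1-x)+j)*t))))/t := by
  have hn0 : (0:ℝ) < (n:ℝ) := by exact_mod_cast hn
  have hint0 : IntegrableOn (fun t => (Real.exp (-(1*t)) - Real.exp (-((n:ℝ)*t)))/t)
      (Ioi (0:ℝ)) := frullani_integrable one_pos hn0
  have hintj : ∀ j ∈ Finset.range (n+1), IntegrableOn
      (fun t => (Real.exp (-((x+(j:ℝ))*t)) - Real.exp (-(((1-x)+(j:ℝ))*t)))/t)
      (Ioi (0:ℝ)) := by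
    intro j _
    have h1x : (0:ℝ) < 1 - x := by linarith
    exact frullani_integrable (by positivity) (by positivity)
  have hsplit : (fun t : ℝ => ((2*x-1)*(Real.exp (-(1*t)) - Real.exp (-((n:ℝ)*t)))
          + ∑ j ∈ Finset.range (n+1),
            (Real.exp (-((x+j)*t)) - Real.exp (-(((1-x)+j)*t))))/t)
      = fun t : ℝ => (2*x-1)*((Real.exp (-(1*t)) - Real.exp (-((n:ℝ)*t)))/t)
          + ∑ j ∈ Finset.range (n+1),
            (Real.exp (-((x+j)*t)) - Real.exp (-(((1-x)+j)*t)))/t := by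
    funext t
    rw [_root_.add_div, Finset.sum_div, mul_div_assoc]
  rw [hsplit, integral_add ((hint0.const_mul _)) (integrable_finset_sum _ hintj),
    MeasureTheory.integral_const_mul, integral_finset_sum _ hintj, frullani one_pos hn0]
  rw [Real.log_one]
  congr 1
  · ring
  · apply Finset.sum_congr rfl
    intro j _
    have h1x : (0:ℝ) < 1 - x := by linarith
    rw [frullani (by positivity : (0:ℝ) < x + j) (by positivity : (0:ℝ) < (1-x) + j)]

lemma logGammaSeq (s : ℝ) (hs : 0 < s) (n : ℕ) (hn : 1 ≤ n) :
    Real.log (Real.GammaSeq s n)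
      = s * Real.log n + Real.log (n !:ℝ) - ∑ j ∈ Finset.range (n+1), Real.log (s + j) := by
  have hn0 : (0:ℝ) < n := by exact_mod_cast hn
  have hP : ∀ j ∈ Finset.range (n+1), s + (j:ℝ) ≠ 0 := by
    intro j _; positivity
  have hPpos : (0:ℝ) < ∏ j ∈ Finset.range (n+1), (s + j) :=
    Finset.prod_pos (fun j _ => by positivity)
  rw [Real.GammaSeq, Real.log_div (by positivity) hPpos.ne', Real.log_mul (by positivity)
    (by positivity), Real.log_rpow hn0, Real.log_prod hP]

lemma A_tendsto (x : ℝ) (hx0 : 0 < x) (hx1 : x < 1) :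
    Tendsto (fun n : ℕ => (2*x-1) * Real.log n
        + ∑ j ∈ Finset.range (n+1), (Real.log ((1-x)+j) - Real.log (x+j)))
      atTop (𝓝 (Real.log (Real.Gamma x) - Real.log (Real.Gamma (1-x)))) := by
  have hG1 : 0 < Real.Gamma x := Real.Gamma_pos_of_pos hx0
  have hG2 : 0 < Real.Gamma (1-x) := Real.Gamma_pos_of_pos (by linarith)
  have t1 : Tendsto (fun n : ℕ => Real.log (Real.GammaSeq x n) - Real.log (Real.GammaSeq (1-x) n))
      atTop (𝓝 (Real.log (Real.Gamma x) - Real.log (Real.Gamma (1-x)))) := by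
    apply Tendsto.sub
    · exact ((Real.continuousAt_log hG1.ne').tendsto).comp (Real.GammaSeq_tendsto_Gamma x)
    · exact ((Real.continuousAt_log hG2.ne').tendsto).comp (Real.GammaSeq_tendsto_Gamma (1-x))
  apply t1.congr'
  filter_upwards [eventually_ge_atTop 1] with n hn
  rw [logGammaSeq x hx0 n hn, logGammaSeq (1-x) (by linarith) n hn, Finset.sum_sub_distrib]
  ring

noncomputable def FF (x : ℝ) (n : ℕ) (t : ℝ) : ℝ :=
  ((2*x-1)*(Real.exp (-(1*t)) - Real.exp (-((n:ℝ)*t)))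
    + ∑ j ∈ Finset.range (n+1), (Real.exp (-((x+j)*t)) - Real.exp (-(((1-x)+j)*t))))/t

noncomputable def ff (x t : ℝ) : ℝ :=
  (Real.sinh ((1 / 2 - x) * t) / Real.sinh (t / 2) - (1 - 2 * x) * Real.exp (-t)) / t

lemma FF_closed (x : ℝ) {t : ℝ} (ht : 0 < t) (n : ℕ) :
    FF x n t = ((2*x-1)*(Real.exp (-t) - Real.exp (-t)^n)
      + (Real.exp (-(x*t)) - Real.exp (-((1-x)*t))) * (1 - Real.exp (-t)^(n+1))
        / (1 - Real.exp (-t)))/t := by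
  have e : Real.exp (-((n:ℝ)*t)) = Real.exp (-t)^n := by
    rw [← Real.exp_nat_mul]; congr 1; ring
  rw [FF, geom_id x t ht (n+1), one_mul, e]

lemma tendsto_FF_int (x : ℝ) (hx0 : 0 < x) (hx1 : x < 1) :
    Tendsto (fun n : ℕ => ∫ t in Ioi (0:ℝ), FF x (n+1) t) atTop
      (𝓝 (∫ t in Ioi (0:ℝ), ff x t)) := by
  set c := min x (1-x) with hc
  have hc0 : 0 < c := lt_min hx0 (by linarith)
  apply MeasureTheory.tendsto_integral_of_dominated_convergence
    (bound := fun t => 6 * Real.exp c * Real.exp (-(c * t)))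
  · intro n
    apply Measurable.aestronglyMeasurable
    apply Measurable.div _ measurable_id
    apply Measurable.add
    · fun_prop
    · apply Finset.measurable_sum
      intro j _
      fun_prop
  · have : IntegrableOn (fun t => Real.exp (-(c * t))) (Ioi (0:ℝ)) := by
      have := exp_neg_integrableOn_Ioi 0 hc0
      simpa [neg_mul] using this
    simpa [mul_assoc] using this.const_mul (6 * Real.exp c)
  · intro n
    filter_upwards [ae_restrict_mem measurableSet_Ioi] with t ht
    rw [Real.norm_eq_abs, FF_closed x ht (n+1)]
    exact bound_main hx0 hx1 (by omega) ht
  · filter_upwards [ae_restrict_mem measurableSet_Ioi] with t ht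
    have ht' : (0:ℝ) < t := ht
    have hr0 : (0:ℝ) < Real.exp (-t) := Real.exp_pos _
    have hr1 : Real.exp (-t) < 1 := Real.exp_lt_one_iff.2 (by linarith)
    set r := Real.exp (-t) with hr
    set Sn := Real.exp (-(x*t)) - Real.exp (-((1-x)*t)) with hSn
    have hGcont : Continuous (fun p : ℝ =>
        ((2*x-1)*(r - r*p) + Sn*(1 - r^2*p)/(1-r))/t) := by fun_prop
    have hpow : Tendsto (fun n : ℕ => r^n) atTop (𝓝 0) :=
      tendsto_pow_atTop_nhds_zero_of_lt_one hr0.le hr1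
    have hcomp := (hGcont.tendsto 0).comp hpow
    have hval : ff x t = ((2*x-1)*(r - r*(0:ℝ)) + Sn*(1 - r^2*(0:ℝ))/(1-r))/t := by
      rw [ff, sinh_identity x t ht']
      ring
    rw [hval]
    apply hcomp.congr
    intro n
    simp only [Function.comp_apply]
    rw [FF_closed x ht' (n+1)]
    have p2 : r^(n+1+1) = r^2*r^n := by ring
    have p1 : r^(n+1) = r*r^n := by ring
    rw [p2, p1]


lemma integral_ff_eq (x : ℝ) (hx0 : 0 < x) (hx1 : x < 1) :
    ∫ t in Ioi (0:ℝ), ff x t = Real.log (Real.Gamma x) - Real.log (Real.Gamma (1-x)) := by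
  have h1 := tendsto_FF_int x hx0 hx1
  have h2 := (A_tendsto x hx0 hx1).comp (tendsto_add_atTop_nat 1)
  have h3 : Tendsto (fun n : ℕ => ∫ t in Ioi (0:ℝ), FF x (n+1) t) atTop
      (𝓝 (Real.log (Real.Gamma x) - Real.log (Real.Gamma (1-x)))) := by
    apply h2.congr
    intro n
    simp only [Function.comp_apply]
    rw [A_eq x hx0 hx1 (n+1) (by omega)]
    rfl
  exact tendsto_nhds_unique h1 h3

theorem kummer_formula (x : ℝ) (hx0 : 0 < x) (hx1 : x < 1) :
    Real.log (Real.Gamma x) =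
      Real.log Real.pi / 2 - 1 / 2 * Real.log (Real.sin (Real.pi * x)) +
        1 / 2 * ∫ t in Set.Ioi (0 : ℝ),
          (Real.sinh ((1 / 2 - x) * t) / Real.sinh (t / 2) -
            (1 - 2 * x) * Real.exp (-t)) / t := by
  have hG1 : 0 < Real.Gamma x := Real.Gamma_pos_of_pos hx0
  have hG2 : 0 < Real.Gamma (1-x) := Real.Gamma_pos_of_pos (by linarith)
  have hs : 0 < Real.sin (Real.pi * x) := by
    apply Real.sin_pos_of_pos_of_lt_pi
    · positivity
    · nlinarith [Real.pi_pos]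
  have hrefl := Real.Gamma_mul_Gamma_one_sub x
  have hlog : Real.log (Real.Gamma x) + Real.log (Real.Gamma (1-x))
      = Real.log Real.pi - Real.log (Real.sin (Real.pi * x)) := by
    rw [← Real.log_mul hG1.ne' hG2.ne', hrefl,
      Real.log_div Real.pi_ne_zero hs.ne']
  have hint : (∫ t in Set.Ioi (0:ℝ),
      (Real.sinh ((1 / 2 - x) * t) / Real.sinh (t / 2) -
        (1 - 2 * x) * Real.exp (-t)) / t)
      = Real.log (Real.Gamma x) - Real.log (Real.Gamma (1-x)) :=
    integral_ff_eq x hx0 hx1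
  rw [hint]
  linarith
end
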